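/- arXiv:1305.2689 — 5 statements merged into one kernel-verified Lean document; each statement's English description precedes it below -/
import Mathlib

section
/- Cauchy interlacing: let A be a real symmetric n×n matrix and A₁ the (n-1)×(n-1) principal submatrix obtained by deleting the first row and column. If r₁ ≤ r₂ ≤ ... ≤ r_{n-1} are the eigenvalues of A₁ and s₁ ≤ s₂ ≤ ... ≤ s_n those of A, then s_k ≤ r_k ≤ s_{k+1} for all k. -/
open Polynomial Matrix

section Aux

variable {m : ℕ}

/-- dot product of a sum on the left -/
private lemma sum_dot {ι : Type*} (t : Finset ι) (f : ι → Fin m → ℝ) (y : Fin m → ℝ) :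
    (∑ i ∈ t, f i) ⬝ᵥ y = ∑ i ∈ t, f i ⬝ᵥ y := by
  simp only [dotProduct, Finset.sum_apply, Finset.sum_mul]
  exact Finset.sum_comm

/-- dot product of a sum on the right -/
private lemma dot_sum {ι : Type*} (t : Finset ι) (y : Fin m → ℝ) (f : ι → Fin m → ℝ) :
    y ⬝ᵥ (∑ i ∈ t, f i) = ∑ i ∈ t, y ⬝ᵥ f i := by
  simp only [dotProduct, Finset.sum_apply, Finset.mul_sum]
  exact Finset.sum_comm

private lemma mulVec_sum' {ι : Type*} (t : Finset ι) (M : Matrix (Fin m) (Fin m) ℝ)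
    (f : ι → Fin m → ℝ) : M *ᵥ (∑ i ∈ t, f i) = ∑ i ∈ t, M *ᵥ f i := by
  simpa only [Matrix.mulVecLin_apply] using map_sum M.mulVecLin f t

/-- Representation of the quadratic form on a combination of an orthonormal family of
"eigenvector-like" vectors. -/
private lemma quad_repr {ι : Type*} [Fintype ι] [DecidableEq ι]
    (M : Matrix (Fin m) (Fin m) ℝ) (u : ι → Fin m → ℝ) (lam : ι → ℝ)
    (hu : ∀ i j, u i ⬝ᵥ u j = if i = j then 1 else 0)
    (hMu : ∀ i j, u i ⬝ᵥ (M *ᵥ u j) = if i = j then lam j else 0)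
    (c : ι → ℝ) :
    (∑ j, c j • u j) ⬝ᵥ (∑ j, c j • u j) = ∑ j, c j * c j ∧
    (∑ j, c j • u j) ⬝ᵥ (M *ᵥ ∑ j, c j • u j) = ∑ j, lam j * (c j * c j) := by
  constructor
  · rw [sum_dot]
    refine Finset.sum_congr rfl fun j _ => ?_
    rw [smul_dotProduct, dot_sum, smul_eq_mul, Finset.mul_sum]
    have : ∀ j' : ι, c j * (u j ⬝ᵥ c j' • u j') = if j = j' then c j * c j' else 0 := by
      intro j'
      rw [dotProduct_smul, hu, smul_eq_mul]
      by_cases h : j = j' <;> simp [h]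
    simp only [this]
    simp
  · rw [mulVec_sum', sum_dot]
    refine Finset.sum_congr rfl fun j _ => ?_
    rw [smul_dotProduct, dot_sum, smul_eq_mul, Finset.mul_sum]
    have : ∀ j' : ι, c j * (u j ⬝ᵥ (M *ᵥ c j' • u j')) = if j = j' then lam j * (c j * c j') else 0 := by
      intro j'
      rw [Matrix.mulVec_smul, dotProduct_smul, hMu, smul_eq_mul]
      by_cases h : j = j' <;> simp [h] <;> ring
    simp only [this]
    simp [mul_comm]

private lemma quad_le {ι : Type*} [Fintype ι] [DecidableEq ι]
    (M : Matrix (Fin m) (Fin m) ℝ) (u : ι → Fin m → ℝ) (lam : ι → ℝ)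
    (hu : ∀ i j, u i ⬝ᵥ u j = if i = j then 1 else 0)
    (hMu : ∀ i j, u i ⬝ᵥ (M *ᵥ u j) = if i = j then lam j else 0)
    {x : Fin m → ℝ} (hx : x ∈ Submodule.span ℝ (Set.range u)) {a : ℝ}
    (ha : ∀ i, lam i ≤ a) : x ⬝ᵥ (M *ᵥ x) ≤ a * (x ⬝ᵥ x) := by
  obtain ⟨c, rfl⟩ := Submodule.mem_span_range_iff_exists_fun ℝ |>.mp hx
  obtain ⟨h1, h2⟩ := quad_repr M u lam hu hMu c
  rw [h1, h2, Finset.mul_sum]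
  exact Finset.sum_le_sum fun j _ =>
    mul_le_mul_of_nonneg_right (ha j) (mul_self_nonneg _)

private lemma le_quad {ι : Type*} [Fintype ι] [DecidableEq ι]
    (M : Matrix (Fin m) (Fin m) ℝ) (u : ι → Fin m → ℝ) (lam : ι → ℝ)
    (hu : ∀ i j, u i ⬝ᵥ u j = if i = j then 1 else 0)
    (hMu : ∀ i j, u i ⬝ᵥ (M *ᵥ u j) = if i = j then lam j else 0)
    {x : Fin m → ℝ} (hx : x ∈ Submodule.span ℝ (Set.range u)) {a : ℝ}
    (ha : ∀ i, a ≤ lam i) : a * (x ⬝ᵥ x) ≤ x ⬝ᵥ (M *ᵥ x) := by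
  obtain ⟨c, rfl⟩ := Submodule.mem_span_range_iff_exists_fun ℝ |>.mp hx
  obtain ⟨h1, h2⟩ := quad_repr M u lam hu hMu c
  rw [h1, h2, Finset.mul_sum]
  exact Finset.sum_le_sum fun j _ =>
    mul_le_mul_of_nonneg_right (ha j) (mul_self_nonneg _)

private lemma linIndep_of_dot {ι : Type*} [Fintype ι] [DecidableEq ι]
    (u : ι → Fin m → ℝ) (hu : ∀ i j, u i ⬝ᵥ u j = if i = j then 1 else 0) :
    LinearIndependent ℝ u := by
  rw [Fintype.linearIndependent_iff]
  intro c hc j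
  have h := congrArg (fun y => u j ⬝ᵥ y) hc
  simp only [dot_sum, dotProduct_zero] at h
  have : ∀ i : ι, u j ⬝ᵥ c i • u i = if j = i then c i else 0 := by
    intro i
    rw [dotProduct_smul, hu, smul_eq_mul]
    by_cases hji : j = i <;> simp [hji]
  rw [Finset.sum_congr rfl fun i _ => this i] at h
  simpa using h

private lemma finrank_span_dot {ι : Type*} [Fintype ι] [DecidableEq ι]
    (u : ι → Fin m → ℝ) (hu : ∀ i j, u i ⬝ᵥ u j = if i = j then 1 else 0) :
    Module.finrank ℝ (Submodule.span ℝ (Set.range u)) = Fintype.card ι :=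
  finrank_span_eq_card (linIndep_of_dot u hu)

private lemma exists_mem_inf (U V : Submodule ℝ (Fin m → ℝ))
    (h : m < Module.finrank ℝ U + Module.finrank ℝ V) :
    ∃ x : Fin m → ℝ, x ≠ 0 ∧ x ∈ U ∧ x ∈ V := by
  have h1 := Submodule.finrank_sup_add_finrank_inf_eq U V
  have h2 : Module.finrank ℝ ↥(U ⊔ V) ≤ m := by
    simpa [Module.finrank_fin_fun] using Submodule.finrank_le (U ⊔ V)
  have h3 : 0 < Module.finrank ℝ ↥(U ⊓ V) := by omega
  obtain ⟨⟨x, hx⟩, hx0⟩ := Module.finrank_pos_iff_exists_ne_zero.mp h3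
  exact ⟨x, fun hxx => hx0 (Subtype.ext hxx), hx.1, hx.2⟩

/-- Conjugation by a matrix with two-sided inverse preserves the characteristic polynomial. -/
private lemma charpoly_conj (U A : Matrix (Fin m) (Fin m) ℝ) (hU : U * star U = 1) :
    (U * A * star U).charpoly = A.charpoly := by
  set V := star U with hV
  have hmap : ∀ M N : Matrix (Fin m) (Fin m) ℝ,
      (C : ℝ →+* ℝ[X]).mapMatrix (M * N) = (C : ℝ →+* ℝ[X]).mapMatrix M *
        (C : ℝ →+* ℝ[X]).mapMatrix N := fun M N => RingHom.map_mul _ M N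
  have hmap1 : (C : ℝ →+* ℝ[X]).mapMatrix U * (C : ℝ →+* ℝ[X]).mapMatrix V = 1 := by
    rw [← hmap, hU]; exact RingHom.map_one _
  have hscal : (C : ℝ →+* ℝ[X]).mapMatrix U * scalar (Fin m) (X : ℝ[X]) *
      (C : ℝ →+* ℝ[X]).mapMatrix V = scalar (Fin m) (X : ℝ[X]) := by
    rw [mul_assoc, (scalar_commute (X : ℝ[X]) (fun r => Commute.all _ _)
      ((C : ℝ →+* ℝ[X]).mapMatrix V)).eq, ← mul_assoc, hmap1, one_mul]
  have key : charmatrix (U * A * V) =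
      (C : ℝ →+* ℝ[X]).mapMatrix U * charmatrix A * (C : ℝ →+* ℝ[X]).mapMatrix V := by
    rw [charmatrix, charmatrix, Matrix.mul_sub, Matrix.sub_mul, hmap, hmap, hscal, mul_assoc]
  rw [Matrix.charpoly, key, det_mul, det_mul, Matrix.charpoly]
  have hdet : ((C : ℝ →+* ℝ[X]).mapMatrix U).det * ((C : ℝ →+* ℝ[X]).mapMatrix V).det = 1 := by
    rw [← det_mul, hmap1, det_one]
  calc ((C : ℝ →+* ℝ[X]).mapMatrix U).det * (charmatrix A).det *
        ((C : ℝ →+* ℝ[X]).mapMatrix V).det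
      = (charmatrix A).det * (((C : ℝ →+* ℝ[X]).mapMatrix U).det *
        ((C : ℝ →+* ℝ[X]).mapMatrix V).det) := by ring
    _ = (charmatrix A).det := by rw [hdet, mul_one]

private lemma comp_delta {ι κ : Type*} [DecidableEq ι] [DecidableEq κ]
    (f : ι → ι → ℝ) (g : ι → ℝ) (h : ∀ i j, f i j = if i = j then g j else 0)
    (e : κ → ι) (he : Function.Injective e) :
    ∀ i j : κ, f (e i) (e j) = if i = j then g (e j) else 0 := by
  intro i j
  rw [h]
  simp [he.eq_iff]

private lemma compare_aux {ι₁ ι₂ : Type*} [Fintype ι₁] [DecidableEq ι₁]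
    [Fintype ι₂] [DecidableEq ι₂] (M : Matrix (Fin m) (Fin m) ℝ)
    (u₁ : ι₁ → Fin m → ℝ) (lam₁ : ι₁ → ℝ) (u₂ : ι₂ → Fin m → ℝ) (lam₂ : ι₂ → ℝ)
    (hu₁ : ∀ i j, u₁ i ⬝ᵥ u₁ j = if i = j then 1 else 0)
    (hMu₁ : ∀ i j, u₁ i ⬝ᵥ (M *ᵥ u₁ j) = if i = j then lam₁ j else 0)
    (hu₂ : ∀ i j, u₂ i ⬝ᵥ u₂ j = if i = j then 1 else 0)
    (hMu₂ : ∀ i j, u₂ i ⬝ᵥ (M *ᵥ u₂ j) = if i = j then lam₂ j else 0)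
    (hcard : m < Fintype.card ι₁ + Fintype.card ι₂)
    {a b : ℝ} (hb : ∀ j, lam₁ j ≤ b) (ha : ∀ i, a ≤ lam₂ i) : a ≤ b := by
  have hcard' : m < Module.finrank ℝ (Submodule.span ℝ (Set.range u₁)) +
      Module.finrank ℝ (Submodule.span ℝ (Set.range u₂)) := by
    rw [finrank_span_dot u₁ hu₁, finrank_span_dot u₂ hu₂]; exact hcard
  obtain ⟨x, hx0, hxU, hxV⟩ := exists_mem_inf _ _ hcard'
  have hub : x ⬝ᵥ (M *ᵥ x) ≤ b * (x ⬝ᵥ x) := quad_le M u₁ lam₁ hu₁ hMu₁ hxU hb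
  have hlb : a * (x ⬝ᵥ x) ≤ x ⬝ᵥ (M *ᵥ x) := le_quad M u₂ lam₂ hu₂ hMu₂ hxV ha
  have hxx : 0 < x ⬝ᵥ x := by
    rcases lt_or_eq_of_le (Finset.sum_nonneg fun i _ => mul_self_nonneg (x i)) with h | h
    · exact h
    · exact absurd (dotProduct_self_eq_zero.mp h.symm) hx0
  exact le_of_mul_le_mul_right (hlb.trans hub) hxx

/-- The characteristic polynomial of a real hermitian matrix is the product of linear factors
given by its eigenvalues. -/
private lemma charpoly_eq_prod_eigs {A : Matrix (Fin m) (Fin m) ℝ} (hA : A.IsHermitian) :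
    A.charpoly = ∏ i, (X - C (hA.eigenvalues i)) := by
  conv_lhs => rw [hA.spectral_theorem, Unitary.conjStarAlgAut_apply]
  rw [charpoly_conj _ _ ((Matrix.mem_unitaryGroup_iff).mp (Matrix.IsHermitian.eigenvectorUnitary hA).2)]
  rw [Matrix.charpoly_of_upperTriangular _ (Matrix.blockTriangular_diagonal _)]
  refine Finset.prod_congr rfl fun i _ => ?_
  simp [Matrix.diagonal_apply_eq]

private lemma roots_prod_eq {ι : Type*} [Fintype ι] (f : ι → ℝ) :
    (∏ i, (X - C (f i))).roots = Finset.univ.val.map f := by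
  rw [Finset.prod_eq_multiset_prod]
  rw [show (Multiset.map (fun i => X - C (f i)) Finset.univ.val) =
    (Finset.univ.val.map f).map (fun a => X - C a) by rw [Multiset.map_map]; rfl]
  exact roots_multiset_prod_X_sub_C _

/-- Two monotone tuples with the same multiset of values are equal. -/
private lemma mono_eq_of_multiset (f g : Fin m → ℝ) (hf : Monotone f) (hg : Monotone g)
    (h : Multiset.map f Finset.univ.val = Multiset.map g Finset.univ.val) : f = g := by
  rw [Fin.univ_val_map, Fin.univ_val_map] at h
  have hperm : (List.ofFn f).Perm (List.ofFn g) := Multiset.coe_eq_coe.mp h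
  exact List.ofFn_injective (hperm.eq_of_sortedLE hf.sortedLE_ofFn hg.sortedLE_ofFn)

private lemma multiset_map_perm {β : Type*} (f : Fin m → β) (σ : Equiv.Perm (Fin m)) :
    Multiset.map (f ∘ σ) Finset.univ.val = Multiset.map f Finset.univ.val := by
  rw [← Multiset.map_map]
  congr 1
  have := congrArg Finset.val (Finset.map_univ_equiv σ)
  simpa [Finset.map] using this

/-- Given a hermitian matrix with charpoly `∏ (X - C (s i))` with `s` monotone, produce an
orthonormal eigenvector family (as plain vectors) with eigenvalues exactly `s`. -/
private lemma exists_eigen_family {A : Matrix (Fin m) (Fin m) ℝ} (hA : A.IsHermitian)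
    (s : Fin m → ℝ) (hs : Monotone s)
    (hchar : A.charpoly = ∏ i, (X - C (s i))) :
    ∃ v : Fin m → Fin m → ℝ,
      (∀ i j, v i ⬝ᵥ v j = if i = j then 1 else 0) ∧
      (∀ i j, v i ⬝ᵥ (A *ᵥ v j) = if i = j then s j else 0) := by
  set σ := Tuple.sort hA.eigenvalues with hσ
  have hmono : Monotone (hA.eigenvalues ∘ σ) := Tuple.monotone_sort _
  have hms : Multiset.map s Finset.univ.val =
      Multiset.map (hA.eigenvalues ∘ σ) Finset.univ.val := by
    rw [multiset_map_perm]
    have h1 := roots_prod_eq s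
    have h2 := roots_prod_eq hA.eigenvalues
    rw [← hchar] at h1
    rw [← charpoly_eq_prod_eigs hA] at h2
    rw [← h1, ← h2]
  have hseq : s = hA.eigenvalues ∘ σ := mono_eq_of_multiset _ _ hs hmono hms
  refine ⟨fun i => ⇑(hA.eigenvectorBasis (σ i)), ?_, ?_⟩
  · intro i j
    have horth := orthonormal_iff_ite.mp hA.eigenvectorBasis.orthonormal (σ i) (σ j)
    have : (inner ℝ (hA.eigenvectorBasis (σ i)) (hA.eigenvectorBasis (σ j)) : ℝ) =
        ⇑(hA.eigenvectorBasis (σ i)) ⬝ᵥ ⇑(hA.eigenvectorBasis (σ j)) := by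
      simp [PiLp.inner_apply, dotProduct, mul_comm]
    rw [this] at horth
    rw [horth]
    simp [EmbeddingLike.apply_eq_iff_eq]
  · intro i j
    rw [hA.mulVec_eigenvectorBasis (σ j), dotProduct_smul]
    have horth := orthonormal_iff_ite.mp hA.eigenvectorBasis.orthonormal (σ i) (σ j)
    have heq : (inner ℝ (hA.eigenvectorBasis (σ i)) (hA.eigenvectorBasis (σ j)) : ℝ) =
        ⇑(hA.eigenvectorBasis (σ i)) ⬝ᵥ ⇑(hA.eigenvectorBasis (σ j)) := by
      simp [PiLp.inner_apply, dotProduct, mul_comm]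
    rw [heq] at horth
    rw [horth]
    have : s j = hA.eigenvalues (σ j) := by rw [hseq]; rfl
    by_cases h : i = j <;> simp [h, EmbeddingLike.apply_eq_iff_eq, ← this]

end Aux

/-- Cauchy interlacing (1829): the eigenvalues of the principal submatrix of a real
symmetric matrix obtained by deleting the first row and column interlace those of
the full matrix. -/
theorem cauchy_interlacing (n : ℕ) (A : Matrix (Fin (n + 1)) (Fin (n + 1)) ℝ)
    (hA : A.IsSymm) (s : Fin (n + 1) → ℝ) (r : Fin n → ℝ)
    (hs : Monotone s) (hr : Monotone r)
    (hcharA : A.charpoly = ∏ i, (Polynomial.X - Polynomial.C (s i)))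
    (hcharA₁ : (A.submatrix Fin.succ Fin.succ).charpoly =
      ∏ i, (Polynomial.X - Polynomial.C (r i))) :
    ∀ k : Fin n, s k.castSucc ≤ r k ∧ r k ≤ s k.succ := by
  set B := A.submatrix Fin.succ Fin.succ with hB
  have hAh : A.IsHermitian := by
    have : Aᴴ = Aᵀ := by ext i j; simp [Matrix.conjTranspose_apply]
    rw [Matrix.IsHermitian, this]; exact hA
  have hBs : B.IsSymm := by
    rw [Matrix.IsSymm, hB, Matrix.transpose_submatrix, hA.eq]
  have hBh : B.IsHermitian := by
    have : Bᴴ = Bᵀ := by ext i j; simp [Matrix.conjTranspose_apply]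
    rw [Matrix.IsHermitian, this]; exact hBs
  obtain ⟨v, hv, hAv⟩ := exists_eigen_family hAh s hs hcharA
  obtain ⟨w, hw, hBw⟩ := exists_eigen_family hBh r hr hcharA₁
  -- embedded vectors
  set wh : Fin n → (Fin (n + 1) → ℝ) := fun j => Fin.cons 0 (w j) with hwh_def
  have hwh : ∀ i j, wh i ⬝ᵥ wh j = if i = j then 1 else 0 := by
    intro i j
    rw [← hw i j]
    simp [hwh_def, dotProduct, Fin.sum_univ_succ]
  have hAwh : ∀ i j, wh i ⬝ᵥ (A *ᵥ wh j) = if i = j then r j else 0 := by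
    intro i j
    have key : ∀ p : Fin n, (A *ᵥ wh j) p.succ = (B *ᵥ w j) p := by
      intro p
      simp [hwh_def, Matrix.mulVec, dotProduct, Fin.sum_univ_succ, hB,
        Matrix.submatrix_apply]
    rw [← hBw i j]
    simp only [dotProduct, Fin.sum_univ_succ, hwh_def, Fin.cons_zero, Fin.cons_succ,
      zero_mul, zero_add]
    exact Finset.sum_congr rfl fun p _ => by rw [key p]
  intro k
  have hkc : (k.castSucc : ℕ) = (k : ℕ) := rfl
  have hks : (k.succ : ℕ) = (k : ℕ) + 1 := rfl
  have hkn : (k : ℕ) < n := k.isLt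
  constructor
  · refine compare_aux A (fun j : ↥(Set.Iic k) => wh j.1) (fun j => r j.1)
      (fun i : ↥(Set.Ici k.castSucc) => v i.1) (fun i => s i.1)
      (comp_delta (fun i j => wh i ⬝ᵥ wh j) (fun _ => 1) hwh _ Subtype.val_injective)
      (comp_delta (fun i j => wh i ⬝ᵥ (A *ᵥ wh j)) r hAwh _ Subtype.val_injective)
      (comp_delta (fun i j => v i ⬝ᵥ v j) (fun _ => 1) hv _ Subtype.val_injective)
      (comp_delta (fun i j => v i ⬝ᵥ (A *ᵥ v j)) s hAv _ Subtype.val_injective)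
      ?_ (fun j => hr j.2) (fun i => hs i.2)
    simp only [← Set.toFinset_card, Set.toFinset_Iic, Set.toFinset_Ici, Fin.card_Iic, Fin.card_Ici]
    omega
  · refine compare_aux A (fun i : ↥(Set.Iic k.succ) => v i.1) (fun i => s i.1)
      (fun j : ↥(Set.Ici k) => wh j.1) (fun j => r j.1)
      (comp_delta (fun i j => v i ⬝ᵥ v j) (fun _ => 1) hv _ Subtype.val_injective)
      (comp_delta (fun i j => v i ⬝ᵥ (A *ᵥ v j)) s hAv _ Subtype.val_injective)
      (comp_delta (fun i j => wh i ⬝ᵥ wh j) (fun _ => 1) hwh _ Subtype.val_injective)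
      (comp_delta (fun i j => wh i ⬝ᵥ (A *ᵥ wh j)) r hAwh _ Subtype.val_injective)
      ?_ (fun i => hs i.2) (fun j => hr j.2)
    simp only [← Set.toFinset_card, Set.toFinset_Iic, Set.toFinset_Ici, Fin.card_Iic, Fin.card_Ici]
    omega
end

section
/- Descartes' rule of signs (upper bound form): the number of positive real roots of a nonzero real polynomial, counted with multiplicity, is at most the number of sign changes in its sequence of nonzero coefficients. -/
open Polynomial

/-- Number of sign changes in a list of reals (consecutive pairs of opposite sign). -/
noncomputable def signChanges (l : List ℝ) : ℕ :=
  ((l.zip l.tail).filter fun q => q.1 * q.2 < 0).length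

namespace Descartes

lemma signChanges_cons (u : ℝ) (l : List ℝ) :
    signChanges (u :: l) = (if u * l.headI < 0 then 1 else 0) + signChanges l := by
  cases l with
  | nil => show _ = (if u * (0:ℝ) < 0 then 1 else 0) + _; simp [signChanges]
  | cons v t => simp [signChanges, List.filter_cons]; split <;> simp [Nat.add_comm, *]

noncomputable def fNZ (l : List ℝ) : List ℝ := l.filter (fun c => c ≠ 0)

lemma fNZ_cons_ne {x : ℝ} (l : List ℝ) (h : x ≠ 0) : fNZ (x :: l) = x :: fNZ l := by
  simp [fNZ, List.filter_cons, h]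

lemma fNZ_cons_zero (l : List ℝ) : fNZ ((0:ℝ) :: l) = fNZ l := by
  simp [fNZ, List.filter_cons]

lemma headI_fNZ_ne {l : List ℝ} (h : fNZ l ≠ []) : (fNZ l).headI ≠ 0 := by
  rcases h' : fNZ l with _ | ⟨a, t⟩
  · exact absurd h' h
  · have ha : a ∈ fNZ l := by rw [h']; exact List.mem_cons_self
    have := List.of_mem_filter ha
    simpa using this

lemma sgn_pp {u v w : ℝ} (h1 : 0 < u * v) (h2 : 0 < v * w) : 0 < u * w := by
  nlinarith [mul_pos h1 h2, sq_nonneg v, sq_nonneg (u*w)]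

lemma sgn_pn {u v w : ℝ} (h1 : 0 < u * v) (h2 : v * w < 0) : u * w < 0 := by
  nlinarith [mul_pos h1 (neg_pos.2 h2), sq_nonneg v]

def convL (a : ℝ) : ℝ → List ℝ → List ℝ
  | prev, [] => [prev]
  | prev, x :: bs => (prev - a * x) :: convL a x bs

lemma sgn_np {u v w : ℝ} (h1 : u * v < 0) (h2 : 0 < v * w) : u * w < 0 := by
  nlinarith [mul_pos (neg_pos.2 h1) h2, sq_nonneg v]

lemma sgn_nn {u v w : ℝ} (h1 : u * v < 0) (h2 : v * w < 0) : 0 < u * w := by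
  nlinarith [mul_pos (neg_pos.2 h1) (neg_pos.2 h2), sq_nonneg v, sq_nonneg (u*w)]

lemma signChanges_nil : signChanges [] = 0 := by simp [signChanges]

lemma key (a : ℝ) (ha : 0 < a) :
    ∀ n : ℕ, ∀ bs : List ℝ, bs.length ≤ n →
      ((∀ prev : ℝ, prev ≠ 0 →
        fNZ (convL a prev bs) ≠ [] ∧
        ((0 < (fNZ (convL a prev bs)).headI * prev ∧
            signChanges (prev :: fNZ bs) ≤ signChanges (fNZ (convL a prev bs)))
          ∨ signChanges (prev :: fNZ bs) + 1 ≤ signChanges (fNZ (convL a prev bs)))) ∧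
      ((fNZ (convL a 0 bs) = [] ∧ fNZ bs = []) ∨
        (fNZ bs ≠ [] ∧ (fNZ (convL a 0 bs)).headI * (fNZ bs).headI < 0 ∧
          signChanges (fNZ bs) + 1 ≤ signChanges (fNZ (convL a 0 bs))))) := by
  have base : ∀ a' : ℝ, 0 < a' →
      ((∀ prev : ℝ, prev ≠ 0 →
        fNZ (convL a' prev []) ≠ [] ∧
        ((0 < (fNZ (convL a' prev [])).headI * prev ∧
            signChanges (prev :: fNZ []) ≤ signChanges (fNZ (convL a' prev [])))
          ∨ signChanges (prev :: fNZ []) + 1 ≤ signChanges (fNZ (convL a' prev [])))) ∧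
      ((fNZ (convL a' 0 []) = [] ∧ fNZ ([] : List ℝ) = []) ∨
        (fNZ ([] : List ℝ) ≠ [] ∧ (fNZ (convL a' 0 [])).headI * (fNZ ([] : List ℝ)).headI < 0 ∧
          signChanges (fNZ ([] : List ℝ)) + 1 ≤ signChanges (fNZ (convL a' 0 []))))) := by
    intro a' _
    constructor
    · intro prev hprev
      have h1 : convL a' prev [] = [prev] := rfl
      rw [h1, fNZ_cons_ne _ hprev]
      have h2 : fNZ ([] : List ℝ) = [] := by simp [fNZ]
      rw [h2]
      refine ⟨by simp, Or.inl ⟨by simpa using mul_self_pos.2 hprev, le_refl _⟩⟩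
    · left
      have h1 : convL a' 0 [] = [(0:ℝ)] := rfl
      rw [h1, fNZ_cons_zero]
      constructor <;> simp [fNZ]
  intro n
  induction n with
  | zero =>
    intro bs hbs
    have : bs = [] := List.eq_nil_of_length_eq_zero (Nat.le_zero.mp hbs)
    subst this
    exact base a ha
  | succ n IH =>
    intro bs hbs
    cases bs with
    | nil => exact base a ha
    | cons x bs' =>
      have hl : bs'.length ≤ n := by simpa using hbs
      obtain ⟨IHM, IHM0⟩ := IH bs' hl
      constructor
      · -- the M part
        intro prev hprev
        by_cases hx : x = 0
        · subst hx
          have e1 : convL a prev (0 :: bs') = prev :: convL a 0 bs' := by simp [convL]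
          rw [e1, fNZ_cons_ne _ hprev, fNZ_cons_zero]
          refine ⟨by simp, ?_⟩
          rcases IHM0 with ⟨hFe, hBe⟩ | ⟨hBne, hsgn, hV⟩
          · rw [hFe, hBe]
            exact Or.inl ⟨by simpa using mul_self_pos.2 hprev, le_refl _⟩
          · have hBI : (fNZ bs').headI ≠ 0 := headI_fNZ_ne hBne
            have hF0ne : fNZ (convL a 0 bs') ≠ [] := by
              intro h
              rw [h, show ([] : List ℝ).headI = 0 from rfl] at hsgn
              simp at hsgn
            have hsgn' : (fNZ bs').headI * (fNZ (convL a 0 bs')).headI < 0 := by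
              rw [mul_comm]; exact hsgn
            simp only [signChanges_cons, List.headI_cons]
            rcases lt_trichotomy (prev * (fNZ bs').headI) 0 with hc | hc | hc
            · have hpf : 0 < prev * (fNZ (convL a 0 bs')).headI := sgn_nn hc hsgn'
              rw [if_pos hc, if_neg (by linarith)]
              exact Or.inl ⟨by simpa using mul_self_pos.2 hprev, by omega⟩
            · exact absurd hc (mul_ne_zero hprev hBI)
            · have hpf : prev * (fNZ (convL a 0 bs')).headI < 0 := sgn_pn hc hsgn'
              rw [if_neg (by linarith), if_pos hpf]
              exact Or.inr (by omega)
        · -- x ≠ 0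
          have e1 : convL a prev (x :: bs') = (prev - a * x) :: convL a x bs' := rfl
          rw [e1, fNZ_cons_ne _ hx]
          obtain ⟨hFne, hbr⟩ := IHM x hx
          have hFI : (fNZ (convL a x bs')).headI ≠ 0 := headI_fNZ_ne hFne
          rcases lt_trichotomy (x * prev) 0 with hxp | hxp | hxp
          · -- x * prev < 0
            have hflip : prev * x < 0 := by rw [mul_comm]; exact hxp
            have hep : 0 < (prev - a * x) * prev := by
              have h1 : 0 < prev * prev := mul_self_pos.2 hprev
              have h2 : 0 < a * (-(x * prev)) := mul_pos ha (neg_pos.2 hxp)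
              nlinarith
            have hene : (prev - a * x) ≠ 0 := by
              rintro h; rw [h] at hep; simp at hep
            rw [fNZ_cons_ne _ hene]
            refine ⟨by simp, ?_⟩
            rcases hbr with ⟨hpos, hle⟩ | hle
            · have hfp : (fNZ (convL a x bs')).headI * prev < 0 := sgn_pn hpos hxp
              have hfp' : prev * (fNZ (convL a x bs')).headI < 0 := by
                rw [mul_comm]; exact hfp
              have hef : (prev - a * x) * (fNZ (convL a x bs')).headI < 0 := sgn_pn hep hfp'
              simp only [signChanges_cons, List.headI_cons] at hle ⊢
              erw [if_pos hef, if_pos hflip]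
              exact Or.inl ⟨by simpa using hep, by omega⟩
            · simp only [signChanges_cons, List.headI_cons] at hle ⊢
              erw [if_pos hflip]
              refine Or.inl ⟨by simpa using hep, ?_⟩
              by_cases hbb : x * (fNZ bs').headI < 0
              · rw [if_pos hbb] at hle ⊢; split <;> omega
              · rw [if_neg hbb] at hle ⊢; split <;> omega
          · exact absurd hxp (mul_ne_zero hx hprev)
          · -- 0 < x * prev
            have hflip : ¬ (prev * x < 0) := by rw [mul_comm]; intro h; linarith
            rcases hbr with ⟨hpos, hle⟩ | hle
            · have hFp : 0 < (fNZ (convL a x bs')).headI * prev := sgn_pp hpos hxp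
              have hFp' : 0 < prev * (fNZ (convL a x bs')).headI := by
                rw [mul_comm]; exact hFp
              by_cases he : (prev - a * x) = 0
              · rw [he, fNZ_cons_zero]
                refine ⟨hFne, Or.inl ⟨by linarith, ?_⟩⟩
                simp only [signChanges_cons, List.headI_cons] at hle ⊢
                erw [if_neg hflip]
                omega
              · rw [fNZ_cons_ne _ he]
                refine ⟨by simp, ?_⟩
                rcases lt_trichotomy ((prev - a * x) * prev) 0 with hec | hec | hec
                · have hef : (prev - a * x) * (fNZ (convL a x bs')).headI < 0 :=
                    sgn_np hec hFp'
                  simp only [signChanges_cons, List.headI_cons] at hle ⊢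
                  erw [if_pos hef, if_neg hflip]
                  exact Or.inr (by omega)
                · exact absurd hec (mul_ne_zero he hprev)
                · refine Or.inl ⟨by simpa using hec, ?_⟩
                  simp only [signChanges_cons, List.headI_cons] at hle ⊢
                  erw [if_neg hflip]
                  by_cases hbb : x * (fNZ bs').headI < 0
                  · rw [if_pos hbb] at hle ⊢; split <;> omega
                  · rw [if_neg hbb] at hle ⊢; split <;> omega
            · by_cases he : (prev - a * x) = 0
              · rw [he, fNZ_cons_zero]
                refine ⟨hFne, Or.inr ?_⟩
                simp only [signChanges_cons, List.headI_cons] at hle ⊢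
                erw [if_neg hflip]
                omega
              · rw [fNZ_cons_ne _ he]
                refine ⟨by simp, Or.inr ?_⟩
                simp only [signChanges_cons, List.headI_cons] at hle ⊢
                erw [if_neg hflip]
                by_cases hbb : x * (fNZ bs').headI < 0
                · rw [if_pos hbb] at hle ⊢; split <;> omega
                · rw [if_neg hbb] at hle ⊢; split <;> omega
      · -- the M₀ part
        by_cases hx : x = 0
        · subst hx
          have e1 : convL a 0 ((0:ℝ) :: bs') = 0 :: convL a 0 bs' := by simp [convL]
          rw [e1, fNZ_cons_zero, fNZ_cons_zero]
          exact IHM0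
        · have e1 : convL a 0 (x :: bs') = (0 - a * x) :: convL a x bs' := rfl
          have he0 : (0 - a * x) ≠ 0 := by
            intro h
            have h' : a * x = 0 := by linarith
            rcases mul_eq_zero.mp h' with h'' | h''
            · exact absurd h'' (ne_of_gt ha)
            · exact hx h''
          rw [e1, fNZ_cons_ne _ he0, fNZ_cons_ne _ hx]
          obtain ⟨hFne, hbr⟩ := IHM x hx
          have hFI : (fNZ (convL a x bs')).headI ≠ 0 := headI_fNZ_ne hFne
          right
          have hex : (0 - a * x) * x < 0 := by nlinarith [mul_self_pos.2 hx]
          refine ⟨by simp, by simpa using hex, ?_⟩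
          rcases hbr with ⟨hpos, hle⟩ | hle
          · have hpos' : 0 < x * (fNZ (convL a x bs')).headI := by
              rw [mul_comm]; exact hpos
            have hef : (0 - a * x) * (fNZ (convL a x bs')).headI < 0 := sgn_np hex hpos'
            simp only [signChanges_cons, List.headI_cons] at hle ⊢
            rw [if_pos hef]
            omega
          · simp only [signChanges_cons, List.headI_cons] at hle ⊢
            by_cases hbb : x * (fNZ bs').headI < 0
            · rw [if_pos hbb] at hle ⊢; split <;> omega
            · rw [if_neg hbb] at hle ⊢; split <;> omega

lemma convL_length (a : ℝ) : ∀ (bs : List ℝ) (prev : ℝ),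
    (convL a prev bs).length = bs.length + 1
  | [], _ => rfl
  | x :: bs, prev => by simp [convL, convL_length a bs x]

lemma convL_getElem (a : ℝ) : ∀ (bs : List ℝ) (prev : ℝ) (i : ℕ)
    (h : i < (convL a prev bs).length),
    (convL a prev bs)[i] = (if i = 0 then prev else bs.getD (i-1) 0) - a * bs.getD i 0 := by
  intro bs
  induction bs with
  | nil =>
    intro prev i h
    have hi : i = 0 := by simpa [convL] using h
    subst hi
    simp [convL]
  | cons x bs ih =>
    intro prev i h
    cases i with
    | zero => simp [convL]
    | succ j =>
      have h' : j < (convL a x bs).length := by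
        simp only [convL_length] at h ⊢
        simpa [convL] using h
      have e1 : convL a prev (x :: bs) = (prev - a * x) :: convL a x bs := rfl
      simp only [e1, List.getElem_cons_succ]
      rw [ih x j h']
      have hgd : (x :: bs).getD (j + 1 - 1) 0 = if j = 0 then x else bs.getD (j-1) 0 := by
        cases j with
        | zero => simp
        | succ k => simp
      rw [if_neg (Nat.succ_ne_zero j), hgd, List.getD_cons_succ]

lemma getD_coeffList (q : ℝ[X]) (j : ℕ) :
    ((List.range (q.natDegree + 1)).map q.coeff).getD j 0 = q.coeff j := by
  rcases lt_or_ge j (q.natDegree + 1) with h | h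
  · rw [List.getD_eq_getElem?_getD, List.getElem?_eq_getElem (by simpa using h)]
    simp
  · rw [List.getD_eq_getElem?_getD, List.getElem?_eq_none (by simpa using h)]
    have hj : q.natDegree < j := by omega
    simp [coeff_eq_zero_of_natDegree_lt hj]

lemma coeff_list_eq (x : ℝ) (q : ℝ[X]) (hq : q ≠ 0) :
    (List.range (((X - C x) * q).natDegree + 1)).map ((X - C x) * q).coeff
      = convL x 0 ((List.range (q.natDegree + 1)).map q.coeff) := by
  have hdeg : ((X - C x) * q).natDegree = q.natDegree + 1 := by
    rw [natDegree_mul (X_sub_C_ne_zero x) hq, natDegree_X_sub_C]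
    omega
  apply List.ext_getElem
  · simp [hdeg, convL_length]
  · intro i h1 h2
    rw [List.getElem_map, List.getElem_range, convL_getElem]
    cases i with
    | zero =>
      rw [if_pos rfl, getD_coeffList]
      simp [sub_mul, mul_coeff_zero]
    | succ j =>
      rw [if_neg (Nat.succ_ne_zero j), getD_coeffList]
      have : (j + 1 - 1) = j := rfl
      rw [this, getD_coeffList, sub_mul, coeff_sub, coeff_X_mul, coeff_C_mul]

end Descartes


open Descartes

/-- Descartes' rule of signs (upper bound form): the number of positive real roots
of a nonzero real polynomial, counted with multiplicity, is at most the number of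
sign changes in its sequence of nonzero coefficients (in order of increasing degree). -/
theorem descartes_rule_of_signs (p : ℝ[X]) (hp : p ≠ 0) :
    (p.roots.filter fun x => 0 < x).card ≤
      signChanges (((List.range (p.natDegree + 1)).map p.coeff).filter fun c => c ≠ 0) := by
  suffices H : ∀ k (p : ℝ[X]), p ≠ 0 → (p.roots.filter fun x => 0 < x).card ≤ k →
      (p.roots.filter fun x => 0 < x).card ≤
        signChanges (((List.range (p.natDegree + 1)).map p.coeff).filter fun c => c ≠ 0) from
    H _ p hp le_rfl
  intro k
  induction k with
  | zero => intro p hp h; exact h.trans (Nat.zero_le _)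
  | succ k IH =>
    intro p hp hcard
    by_cases h0 : (p.roots.filter fun x => 0 < x).card = 0
    · rw [h0]; exact Nat.zero_le _
    · obtain ⟨x, hx⟩ := Multiset.card_pos_iff_exists_mem.mp (Nat.pos_of_ne_zero h0)
      rw [Multiset.mem_filter] at hx
      obtain ⟨hxr, hxpos⟩ := hx
      have hroot : IsRoot p x := isRoot_of_mem_roots hxr
      obtain ⟨q, hq⟩ := (dvd_iff_isRoot).2 hroot
      have hqne : q ≠ 0 := by rintro rfl; rw [mul_zero] at hq; exact hp hq
      have hpq : (X - C x) * q ≠ 0 := hq ▸ hp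
      have hroots : p.roots = {x} + q.roots := by
        rw [hq, roots_mul hpq, roots_X_sub_C]
      have hcardsplit : (p.roots.filter fun y => 0 < y).card
          = (q.roots.filter fun y => 0 < y).card + 1 := by
        rw [hroots, Multiset.filter_add, Multiset.card_add, Multiset.filter_singleton,
          if_pos hxpos]
        simp [Nat.add_comm]
      have hqcard : (q.roots.filter fun y => 0 < y).card ≤ k := by omega
      have hIH := IH q hqne hqcard
      -- apply the key lemma
      have hkey := (key x hxpos (q.natDegree + 1)
        ((List.range (q.natDegree + 1)).map q.coeff) (by simp)).2
      have hBne : fNZ ((List.range (q.natDegree + 1)).map q.coeff) ≠ [] := by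
        have hmem : q.leadingCoeff ∈ (List.range (q.natDegree + 1)).map q.coeff := by
          apply List.mem_map.2
          exact ⟨q.natDegree, List.mem_range.2 (by omega), rfl⟩
        have : q.leadingCoeff ∈ fNZ ((List.range (q.natDegree + 1)).map q.coeff) := by
          apply List.mem_filter.2
          refine ⟨hmem, by simpa using leadingCoeff_ne_zero.2 hqne⟩
        exact List.ne_nil_of_mem this
      rcases hkey with ⟨hFe, hBe⟩ | ⟨_, _, hV⟩
      · exact absurd hBe hBne
      · have hlist : (List.range (p.natDegree + 1)).map p.coeff
            = convL x 0 ((List.range (q.natDegree + 1)).map q.coeff) := by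
          rw [hq]; exact coeff_list_eq x q hqne
        calc (p.roots.filter fun y => 0 < y).card
            = (q.roots.filter fun y => 0 < y).card + 1 := hcardsplit
          _ ≤ signChanges (fNZ ((List.range (q.natDegree + 1)).map q.coeff)) + 1 := by
              exact Nat.add_le_add_right hIH 1
          _ ≤ signChanges (fNZ (convL x 0 ((List.range (q.natDegree + 1)).map q.coeff))) := by
              refine le_trans ?_ hV
              exact Nat.add_le_add_right (le_refl _) 1
          _ = _ := by rw [← hlist]; rfl
end

section
/- Sturm's theorem: let p be a squarefree real polynomial and (p₀, p₁, ..., p_m) its Sturm sequence (p₀ = p, p₁ = p', and p_{k+1} = -(p_{k-1} mod p_k)). For real numbers a < b with p(a) ≠ 0 and p(b) ≠ 0, the number of distinct real roots of p in (a, b] equals V(a) - V(b), where V(x) is the number of sign changes in the sequence (p₀(x), ..., p_m(x)). -/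
open Polynomial

/-- The Sturm sequence of a real polynomial: `p₀ = p`, `p₁ = p'`, and
`p_{k+2} = -(p_k mod p_{k+1})`. -/
noncomputable def sturmSeq (p : ℝ[X]) : ℕ → ℝ[X]
  | 0 => p
  | 1 => derivative p
  | (k + 2) => -(sturmSeq p k % sturmSeq p (k + 1))

/-- The number of sign variations `V(x)` in the Sturm sequence `(p₀, ..., p_m)`
evaluated at `x`, zeros being ignored. -/
noncomputable def sturmVar (p : ℝ[X]) (m : ℕ) (x : ℝ) : ℕ :=
  signChanges (((List.range (m + 1)).map fun k => (sturmSeq p k).eval x).filter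
    fun y => y ≠ 0)

namespace Sturm

lemma sturm_step (p : ℝ[X]) (k : ℕ) :
    sturmSeq p (k+2) = sturmSeq p (k+1) * (sturmSeq p k / sturmSeq p (k+1)) - sturmSeq p k := by
  rw [show sturmSeq p (k+2) = -(sturmSeq p k % sturmSeq p (k+1)) from rfl,
    EuclideanDomain.mod_eq_sub_mul_div]
  ring

lemma eval_step (p : ℝ[X]) (k : ℕ) (t : ℝ) :
    (sturmSeq p (k+2)).eval t =
      (sturmSeq p (k+1)).eval t * (sturmSeq p k / sturmSeq p (k+1)).eval t
        - (sturmSeq p k).eval t := by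
  rw [sturm_step]; simp

lemma coprime_chain (p : ℝ[X]) (hp : IsCoprime p (derivative p)) :
    ∀ k, IsCoprime (sturmSeq p k) (sturmSeq p (k+1))
  | 0 => hp
  | (k+1) => by
    have h := coprime_chain p hp k
    rw [show sturmSeq p (k+2) = -(sturmSeq p k % sturmSeq p (k+1)) from rfl,
      EuclideanDomain.mod_eq_sub_mul_div]
    have := (h.symm.add_mul_left_right (-(sturmSeq p k / sturmSeq p (k+1)))).neg_right
    convert this using 1
    case e'_2 => rfl
    ring

lemma not_both_zero (p : ℝ[X]) (hp : IsCoprime p (derivative p)) (k : ℕ) (t : ℝ)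
    (h0 : (sturmSeq p k).eval t = 0) : (sturmSeq p (k+1)).eval t ≠ 0 := by
  obtain ⟨u, v, huv⟩ := coprime_chain p hp k
  intro h1
  have := congrArg (eval t) huv
  simp [h0, h1] at this

lemma exists_const (p : ℝ[X]) (hp : IsCoprime p (derivative p)) (m : ℕ)
    (hm' : sturmSeq p (m+1) = 0) :
    ∃ c : ℝ, c ≠ 0 ∧ ∀ t, (sturmSeq p m).eval t = c := by
  have h := coprime_chain p hp m
  rw [hm'] at h
  obtain ⟨r, hr, hCr⟩ := Polynomial.isUnit_iff.mp (isCoprime_zero_right.mp h)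
  exact ⟨r, isUnit_iff_ne_zero.mp hr, fun t => by rw [← hCr, eval_C]⟩

lemma neighbor_neg (p : ℝ[X]) (k : ℕ) (t : ℝ) (h : (sturmSeq p (k+1)).eval t = 0) :
    (sturmSeq p (k+2)).eval t = -(sturmSeq p k).eval t := by
  rw [eval_step, h]; ring

lemma sign_const {q : ℝ[X]} {x y : ℝ} (h : ∀ t ∈ Set.Icc x y, q.eval t ≠ 0)
    {s t : ℝ} (hs : s ∈ Set.Icc x y) (ht : t ∈ Set.Icc x y) :
    0 < q.eval s * q.eval t := by
  rcases lt_trichotomy (q.eval s * q.eval t) 0 with hlt | heq | hgt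
  · exfalso
    have hc : ContinuousOn (fun u => q.eval u) (Set.uIcc s t) :=
      (Polynomial.continuous q).continuousOn
    have hsub : Set.uIcc s t ⊆ Set.Icc x y := by
      rw [Set.uIcc_eq_union]
      rintro u (hu | hu)
      · exact ⟨le_trans hs.1 hu.1, le_trans hu.2 ht.2⟩
      · exact ⟨le_trans ht.1 hu.1, le_trans hu.2 hs.2⟩
    have h0 : (0:ℝ) ∈ Set.uIcc (q.eval s) (q.eval t) := by
      rcases mul_neg_iff.mp hlt with ⟨h1, h2⟩ | ⟨h1, h2⟩
      · exact Set.mem_uIcc.2 (Or.inr ⟨h2.le, h1.le⟩)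
      · exact Set.mem_uIcc.2 (Or.inl ⟨h1.le, h2.le⟩)
    obtain ⟨u, hu, hu0⟩ := intermediate_value_uIcc hc h0
    exact h u (hsub hu) hu0
  · exfalso
    rcases mul_eq_zero.mp heq with h' | h'
    · exact h s hs h'
    · exact h t ht h'
  · exact hgt


lemma signChanges_singleton (a : ℝ) : signChanges [a] = 0 := rfl

lemma signChanges_cons_cons (a b : ℝ) (l : List ℝ) :
    signChanges (a :: b :: l) = (if a * b < 0 then 1 else 0) + signChanges (b :: l) := by
  simp only [signChanges, List.tail_cons, List.zip_cons_cons, List.filter_cons]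
  by_cases h : a * b < 0
  · simp [h, Nat.add_comm]
  · simp [h]

noncomputable def wgt (p : ℝ[X]) (t : ℝ) (j : ℕ) : ℕ :=
  (if (sturmSeq p j).eval t * (sturmSeq p (j+1)).eval t < 0 then 1 else 0) +
  (if (sturmSeq p (j+1)).eval t = 0 then 1 else 0)

noncomputable def evalList (p : ℝ[X]) (m : ℕ) (t : ℝ) (k : ℕ) : List ℝ :=
  (List.range' k (m + 1 - k)).map fun i => (sturmSeq p i).eval t

lemma evalList_cons (p : ℝ[X]) {m k : ℕ} (hk : k ≤ m) (t : ℝ) :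
    evalList p m t k = (sturmSeq p k).eval t :: evalList p m t (k+1) := by
  unfold evalList
  rw [show m + 1 - k = (m + 1 - (k+1)) + 1 by omega, List.range'_succ]
  rfl

lemma evalList_top (p : ℝ[X]) (m : ℕ) (t : ℝ) : evalList p m t (m+1) = [] := by
  unfold evalList
  simp

lemma signChanges_evalList (p : ℝ[X]) (hp : IsCoprime p (derivative p)) {m : ℕ}
    (hm' : sturmSeq p (m+1) = 0) (t : ℝ) :
    ∀ d k, m - k = d → k ≤ m → (sturmSeq p k).eval t ≠ 0 →
      signChanges ((evalList p m t k).filter fun y => y ≠ 0) =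
        ∑ j ∈ Finset.Ico k m, wgt p t j := by
  obtain ⟨c, hc, hcval⟩ := exists_const p hp m hm'
  intro d
  induction d using Nat.strong_induction_on with
  | _ d ih =>
    intro k hd hk hk0
    rcases eq_or_lt_of_le hk with rfl | hkm
    · rw [evalList_cons p le_rfl, evalList_top]
      simp [hk0, signChanges_singleton]
    · -- k < m
      have hk1 : k + 1 ≤ m := hkm
      rw [evalList_cons p hk]
      by_cases h1 : (sturmSeq p (k+1)).eval t = 0
      · -- zero at k+1
        have hk1m : k + 1 < m := by
          rcases eq_or_lt_of_le hk1 with h | h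
          · exfalso; exact hc (by rw [← hcval t, ← h, h1])
          · exact h
        have hk2 : k + 2 ≤ m := hk1m
        have h2 : (sturmSeq p (k+2)).eval t = -(sturmSeq p k).eval t := neighbor_neg p k t h1
        have h2ne : (sturmSeq p (k+2)).eval t ≠ 0 := by rw [h2]; simpa using hk0
        rw [evalList_cons p hk1, evalList_cons p hk2]
        have ihv := ih (m - (k+2)) (by omega) (k+2) rfl hk2 h2ne
        rw [evalList_cons p hk2] at ihv
        simp only [List.filter_cons, decide_eq_true_eq]
        rw [if_pos hk0, if_neg (by simpa using h1), if_pos h2ne]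
        simp only [List.filter_cons, decide_eq_true_eq] at ihv
        rw [if_pos h2ne] at ihv
        rw [signChanges_cons_cons, ihv, Finset.sum_eq_sum_Ico_succ_bot hkm,
          Finset.sum_eq_sum_Ico_succ_bot hk1m]
        have hw1 : wgt p t k = 1 := by
          unfold wgt; rw [h1]; simp
        have hw2 : wgt p t (k+1) = 0 := by
          unfold wgt; rw [h1]; simp [h2ne]
        rw [show k+1+1 = k+2 from rfl, hw1, hw2,
          if_pos (show (sturmSeq p k).eval t * (sturmSeq p (k+2)).eval t < 0 by
            rw [h2]; nlinarith [mul_self_pos.mpr hk0])]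
        omega
      · -- nonzero at k+1
        have ihv := ih (m - (k+1)) (by omega) (k+1) rfl hk1 h1
        rw [evalList_cons p hk1] at ihv ⊢
        simp only [List.filter_cons, decide_eq_true_eq]
        rw [if_pos hk0, if_pos h1]
        simp only [List.filter_cons, decide_eq_true_eq] at ihv
        rw [if_pos h1] at ihv
        rw [signChanges_cons_cons, ihv, Finset.sum_eq_sum_Ico_succ_bot hkm]
        unfold wgt
        rw [if_neg h1]
        omega


lemma sturmVar_eq_sum (p : ℝ[X]) (hp : IsCoprime p (derivative p)) {m : ℕ}
    (hm' : sturmSeq p (m+1) = 0) (t : ℝ) (h0 : p.eval t ≠ 0) :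
    sturmVar p m t = ∑ j ∈ Finset.Ico 0 m, wgt p t j := by
  have h := signChanges_evalList p hp hm' t (m - 0) 0 rfl (Nat.zero_le m) h0
  rw [← h]
  unfold sturmVar evalList
  rw [List.range_eq_range']
  norm_num

lemma ne_zero_left {a b : ℝ} (h : 0 < a * b) : a ≠ 0 := fun h0 => by simp [h0] at h

lemma same_sign_iff {a b c d : ℝ} (h1 : 0 < a * c) (h2 : 0 < b * d) :
    (a * b < 0 ↔ c * d < 0) := by
  constructor <;> intro h <;> nlinarith [mul_pos h1 h2]

lemma block_val {a s c g : ℝ} (ha : 0 < a * g) (hc : 0 < c * (-g)) :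
    ((if a*s<0 then (1:ℕ) else 0) + (if s=0 then 1 else 0)) +
    ((if s*c<0 then 1 else 0) + (if c=0 then 1 else 0)) = 1 := by
  have hac : a * c < 0 := by nlinarith [mul_pos ha hc, sq_nonneg g, sq_nonneg (a*c)]
  have hcne : c ≠ 0 := fun h => by rw [h] at hac; simp at hac
  rw [if_neg hcne]
  rcases lt_trichotomy s 0 with hs|hs|hs
  · rcases mul_neg_iff.mp hac with ⟨hA,hC⟩|⟨hA,hC⟩
    · rw [if_pos (by nlinarith), if_neg hs.ne, if_neg (by push_neg; nlinarith)]
    · rw [if_neg (by push_neg; nlinarith), if_neg hs.ne, if_pos (by nlinarith)]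
  · rw [if_neg (by rw [hs]; simp), if_pos hs, if_neg (by rw [hs]; simp)]
  · rcases mul_neg_iff.mp hac with ⟨hA,hC⟩|⟨hA,hC⟩
    · rw [if_neg (by push_neg; nlinarith), if_neg hs.ne', if_pos (by nlinarith)]
    · rw [if_pos (by nlinarith), if_neg hs.ne', if_neg (by push_neg; nlinarith)]

lemma blocks (p : ℝ[X]) (hp : IsCoprime p (derivative p)) {m : ℕ}
    (hm' : sturmSeq p (m+1) = 0) {x y r : ℝ} (hxy : x ≤ y) (hr : r ∈ Set.Icc x y)
    (hroots : ∀ k, k ≤ m → sturmSeq p k ≠ 0 →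
      ∀ t ∈ Set.Icc x y, (sturmSeq p k).eval t = 0 → t = r) :
    ∀ d k, m - k = d → k ≤ m → (sturmSeq p k).eval r ≠ 0 →
      ∑ j ∈ Finset.Ico k m, wgt p x j = ∑ j ∈ Finset.Ico k m, wgt p y j := by
  obtain ⟨c, hc, hcval⟩ := exists_const p hp m hm'
  have key : ∀ k, k ≤ m → (sturmSeq p k).eval r ≠ 0 →
      ∀ t ∈ Set.Icc x y, 0 < (sturmSeq p k).eval t * (sturmSeq p k).eval r := by
    intro k hk hkr t ht
    have hkne : sturmSeq p k ≠ 0 := fun h0 => hkr (by rw [h0]; simp)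
    refine sign_const (fun u hu hu0 => hkr ?_) ht hr
    rw [← hroots k hk hkne u hu hu0]; exact hu0
  intro d
  induction d using Nat.strong_induction_on with
  | _ d ih =>
    intro k hd hk hkr
    rcases eq_or_lt_of_le hk with rfl | hkm
    · simp
    · have hk1 : k + 1 ≤ m := hkm
      by_cases h1 : (sturmSeq p (k+1)).eval r = 0
      · have hk1m : k+1 < m := by
          rcases eq_or_lt_of_le hk1 with h | h
          · exfalso; apply hc; rw [← hcval r, ← h]; exact h1
          · exact h
        have hk2 : k+2 ≤ m := hk1m
        have h2 : (sturmSeq p (k+2)).eval r = -(sturmSeq p k).eval r := neighbor_neg p k r h1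
        have h2ne : (sturmSeq p (k+2)).eval r ≠ 0 := by rw [h2]; simpa using hkr
        have hx0 := key k hk hkr x (Set.left_mem_Icc.mpr hxy)
        have hy0 := key k hk hkr y (Set.right_mem_Icc.mpr hxy)
        have hx2 := key (k+2) hk2 h2ne x (Set.left_mem_Icc.mpr hxy)
        have hy2 := key (k+2) hk2 h2ne y (Set.right_mem_Icc.mpr hxy)
        rw [h2] at hx2 hy2
        have hbx : wgt p x k + wgt p x (k+1) = 1 := by
          unfold wgt; exact block_val hx0 hx2
        have hby : wgt p y k + wgt p y (k+1) = 1 := by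
          unfold wgt; exact block_val hy0 hy2
        rw [Finset.sum_eq_sum_Ico_succ_bot hkm (wgt p x),
          Finset.sum_eq_sum_Ico_succ_bot hkm (wgt p y),
          Finset.sum_eq_sum_Ico_succ_bot hk1m (wgt p x),
          Finset.sum_eq_sum_Ico_succ_bot hk1m (wgt p y),
          show k+1+1 = k+2 from rfl,
          ih (m - (k+2)) (by omega) (k+2) rfl hk2 h2ne]
        omega
      · have hx0 := key k hk hkr x (Set.left_mem_Icc.mpr hxy)
        have hy0 := key k hk hkr y (Set.right_mem_Icc.mpr hxy)
        have h1x := key (k+1) hk1 h1 x (Set.left_mem_Icc.mpr hxy)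
        have h1y := key (k+1) hk1 h1 y (Set.right_mem_Icc.mpr hxy)
        have hwx : wgt p x k = wgt p y k := by
          unfold wgt
          rw [if_neg (ne_zero_left h1x), if_neg (ne_zero_left h1y),
            if_congr ((same_sign_iff hx0 h1x).trans (same_sign_iff hy0 h1y).symm) rfl rfl]
        rw [Finset.sum_eq_sum_Ico_succ_bot hkm (wgt p x),
          Finset.sum_eq_sum_Ico_succ_bot hkm (wgt p y), hwx,
          ih (m - (k+1)) (by omega) (k+1) rfl hk1 h1]


lemma core (p : ℝ[X]) (hp : IsCoprime p (derivative p)) {m : ℕ}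
    (hm' : sturmSeq p (m+1) = 0) {x y r : ℝ} (hxy : x < y) (hr : r ∈ Set.Icc x y)
    (hx : p.eval x ≠ 0) (hy : p.eval y ≠ 0)
    (hroots : ∀ k, k ≤ m → sturmSeq p k ≠ 0 →
      ∀ t ∈ Set.Icc x y, (sturmSeq p k).eval t = 0 → t = r) :
    sturmVar p m x = sturmVar p m y + (if p.eval r = 0 then 1 else 0) := by
  have hS0 : sturmSeq p 0 = p := rfl
  rw [sturmVar_eq_sum p hp hm' x hx, sturmVar_eq_sum p hp hm' y hy]
  by_cases hpr : p.eval r = 0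
  · rw [if_pos hpr]
    have hp1 : (sturmSeq p 1).eval r ≠ 0 := not_both_zero p hp 0 r (by rw [hS0]; exact hpr)
    have hm1 : 1 ≤ m := by
      rcases Nat.eq_zero_or_pos m with h | h
      · subst h; exact absurd (by rw [hm']; simp) hp1
      · exact h
    have keysub : ∀ t ∈ Set.Icc x y, 0 < (sturmSeq p 1).eval t * (sturmSeq p 1).eval r := by
      intro t ht
      have hkne : sturmSeq p 1 ≠ 0 := fun h0 => hp1 (by rw [h0]; simp)
      refine sign_const (fun u hu hu0 => hp1 ?_) ht hr
      rw [← hroots 1 hm1 hkne u hu hu0]; exact hu0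
    have hd : ∀ t ∈ Set.Icc x y, (sturmSeq p 1).eval t ≠ 0 :=
      fun t ht => ne_zero_left (keysub t ht)
    have hcont : ContinuousOn (fun t => p.eval t) (Set.Icc x y) :=
      (Polynomial.continuous p).continuousOn
    have hrx : x < r := lt_of_le_of_ne hr.1 (fun h => hx (by rw [h]; exact hpr))
    have hry : r < y := lt_of_le_of_ne hr.2 (fun h => hy (by rw [← h]; exact hpr))
    have hxm : x ∈ Set.Icc x y := Set.left_mem_Icc.mpr hxy.le
    have hym : y ∈ Set.Icc x y := Set.right_mem_Icc.mpr hxy.le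
    have h1x := keysub x hxm
    have h1y := keysub y hym
    have hw : wgt p x 0 = 1 ∧ wgt p y 0 = 0 := by
      rcases lt_or_gt_of_ne hp1 with hneg | hpos
      · have hd' : ∀ t ∈ interior (Set.Icc x y), deriv (fun u => p.eval u) t < 0 := by
          intro t ht
          rw [Polynomial.deriv]
          have := keysub t (interior_subset ht)
          show (sturmSeq p 1).eval t < 0
          nlinarith
        have hanti : StrictAntiOn (fun u => p.eval u) (Set.Icc x y) :=
          strictAntiOn_of_deriv_neg (convex_Icc x y) hcont hd'
        have hpx : 0 < p.eval x := by
          have h' : p.eval r < p.eval x := hanti hxm hr hrx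
          rw [hpr] at h'; exact h'
        have hpy : p.eval y < 0 := by
          have h' : p.eval y < p.eval r := hanti hr hym hry
          rwa [hpr] at h'
        have he1x : (sturmSeq p 1).eval x < 0 := by nlinarith
        have he1y : (sturmSeq p 1).eval y < 0 := by nlinarith
        constructor
        · unfold wgt
          rw [hS0, if_pos (mul_neg_of_pos_of_neg hpx he1x), if_neg (hd x hxm)]
        · unfold wgt
          rw [hS0, if_neg (by push_neg; nlinarith), if_neg (hd y hym)]
      · have hd' : ∀ t ∈ interior (Set.Icc x y), 0 < deriv (fun u => p.eval u) t := by
          intro t ht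
          rw [Polynomial.deriv]
          have := keysub t (interior_subset ht)
          show 0 < (sturmSeq p 1).eval t
          nlinarith
        have hmono : StrictMonoOn (fun u => p.eval u) (Set.Icc x y) :=
          strictMonoOn_of_deriv_pos (convex_Icc x y) hcont hd'
        have hpx : p.eval x < 0 := by
          have h' : p.eval x < p.eval r := hmono hxm hr hrx
          rwa [hpr] at h'
        have hpy : 0 < p.eval y := by
          have h' : p.eval r < p.eval y := hmono hr hym hry
          rw [hpr] at h'; exact h'
        have he1x : 0 < (sturmSeq p 1).eval x := by nlinarith
        have he1y : 0 < (sturmSeq p 1).eval y := by nlinarith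
        constructor
        · unfold wgt
          rw [hS0, if_pos (mul_neg_of_neg_of_pos hpx he1x), if_neg (hd x hxm)]
        · unfold wgt
          rw [hS0, if_neg (by push_neg; nlinarith), if_neg (hd y hym)]
    rw [Finset.sum_eq_sum_Ico_succ_bot (show (0:ℕ) < m from hm1) (wgt p x),
      Finset.sum_eq_sum_Ico_succ_bot (show (0:ℕ) < m from hm1) (wgt p y),
      hw.1, hw.2, show (0:ℕ)+1 = 1 from rfl,
      blocks p hp hm' hxy.le hr hroots (m - 1) 1 rfl hm1 hp1]
    omega
  · rw [if_neg hpr, add_zero]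
    exact blocks p hp hm' hxy.le hr hroots (m - 0) 0 rfl (Nat.zero_le m)
      (by rw [hS0]; exact hpr)

end Sturm

theorem sturm_theorem' (p : ℝ[X]) (hp : IsCoprime p (derivative p))
    (m : ℕ) (hm' : sturmSeq p (m + 1) = 0)
    (a b : ℝ) (hab : a < b) (ha : p.eval a ≠ 0) (hb : p.eval b ≠ 0) :
    sturmVar p m a = sturmVar p m b +
      (p.roots.toFinset.filter fun x => a < x ∧ x ≤ b).card := by
  classical
  have hS0 : sturmSeq p 0 = p := rfl
  have hp0 : p ≠ 0 := fun h => ha (by rw [h]; simp)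
  set P : ℝ[X] := ∏ k ∈ Finset.range (m+1), (if sturmSeq p k = 0 then 1 else sturmSeq p k)
    with hPdef
  have hPne : P ≠ 0 := by
    rw [hPdef]
    apply Finset.prod_ne_zero_iff.mpr
    intro k hk
    split
    · exact one_ne_zero
    · assumption
  have hPk : ∀ k, k ≤ m → sturmSeq p k ≠ 0 → ∀ t : ℝ,
      (sturmSeq p k).eval t = 0 → t ∈ P.roots.toFinset := by
    intro k hk hkne t ht
    have hdvd : sturmSeq p k ∣ P := by
      have h := Finset.dvd_prod_of_mem
        (fun k => if sturmSeq p k = 0 then 1 else sturmSeq p k)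
        (Finset.mem_range.mpr (Nat.lt_succ_of_le hk))
      simp only [if_neg hkne] at h
      exact h
    obtain ⟨q, hq⟩ := hdvd
    refine Multiset.mem_toFinset.mpr (Polynomial.mem_roots'.mpr ⟨hPne, ?_⟩)
    show P.eval t = 0
    rw [hq, eval_mul, ht, zero_mul]
  have claim : ∀ n : ℕ, ∀ x y : ℝ, x < y → p.eval x ≠ 0 → p.eval y ≠ 0 →
      (P.roots.toFinset.filter fun t => x ≤ t ∧ t ≤ y).card ≤ n →
      sturmVar p m x = sturmVar p m y +
        (p.roots.toFinset.filter fun t => x < t ∧ t ≤ y).card := by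
    intro n
    induction n using Nat.strong_induction_on with
    | _ n ih =>
      intro x y hxy hx hy hcard
      by_cases htwo : ∃ r1 ∈ (P.roots.toFinset.filter fun t => x ≤ t ∧ t ≤ y),
          ∃ r2 ∈ (P.roots.toFinset.filter fun t => x ≤ t ∧ t ≤ y), r1 ≠ r2
      · -- split the interval
        have go : ∀ r1 r2 : ℝ, r1 ∈ (P.roots.toFinset.filter fun t => x ≤ t ∧ t ≤ y) →
            r2 ∈ (P.roots.toFinset.filter fun t => x ≤ t ∧ t ≤ y) → r1 < r2 →
            sturmVar p m x = sturmVar p m y +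
              (p.roots.toFinset.filter fun t => x < t ∧ t ≤ y).card := by
          intro r1 r2 h1T h2T hlt
          obtain ⟨h1P, h1xy⟩ := Finset.mem_filter.mp h1T
          obtain ⟨h2P, h2xy⟩ := Finset.mem_filter.mp h2T
          have hn2 : 2 ≤ n := by
            have h2c : 2 ≤ (P.roots.toFinset.filter fun t => x ≤ t ∧ t ≤ y).card :=
              Finset.one_lt_card.mpr ⟨r1, h1T, r2, h2T, hlt.ne⟩
            omega
          obtain ⟨c, hcI, hcP⟩ :=
            ((Set.Ioo_infinite hlt).diff (P.roots.toFinset).finite_toSet).nonempty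
          have hxc : x < c := lt_of_le_of_lt h1xy.1 hcI.1
          have hcy : c < y := lt_of_lt_of_le hcI.2 h2xy.2
          have hpc : p.eval c ≠ 0 := by
            intro h0
            exact hcP (Finset.mem_coe.mpr (hPk 0 (Nat.zero_le m) (by rw [hS0]; exact hp0) c h0))
          have hsub1 : (P.roots.toFinset.filter fun t => x ≤ t ∧ t ≤ c) ⊆
              (P.roots.toFinset.filter fun t => x ≤ t ∧ t ≤ y).erase r2 := by
            intro t ht'
            obtain ⟨htP, ht1, ht2⟩ := Finset.mem_filter.mp ht'
            refine Finset.mem_erase.mpr ⟨fun h => ?_, Finset.mem_filter.mpr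
              ⟨htP, ht1, le_trans ht2 hcy.le⟩⟩
            rw [h] at ht2
            exact absurd (lt_of_lt_of_le hcI.2 ht2) (lt_irrefl c)
          have hsub2 : (P.roots.toFinset.filter fun t => c ≤ t ∧ t ≤ y) ⊆
              (P.roots.toFinset.filter fun t => x ≤ t ∧ t ≤ y).erase r1 := by
            intro t ht'
            obtain ⟨htP, ht1, ht2⟩ := Finset.mem_filter.mp ht'
            refine Finset.mem_erase.mpr ⟨fun h => ?_, Finset.mem_filter.mpr
              ⟨htP, le_trans hxc.le ht1, ht2⟩⟩
            rw [h] at ht1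
            exact absurd (lt_of_le_of_lt ht1 hcI.1) (lt_irrefl c)
          have hcard1 : (P.roots.toFinset.filter fun t => x ≤ t ∧ t ≤ c).card ≤ n - 1 := by
            have := Finset.card_le_card hsub1
            rw [Finset.card_erase_of_mem h2T] at this
            omega
          have hcard2 : (P.roots.toFinset.filter fun t => c ≤ t ∧ t ≤ y).card ≤ n - 1 := by
            have := Finset.card_le_card hsub2
            rw [Finset.card_erase_of_mem h1T] at this
            omega
          have ih1 := ih (n-1) (by omega) x c hxc hx hpc hcard1
          have ih2 := ih (n-1) (by omega) c y hcy hpc hy hcard2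
          have hsplit : (p.roots.toFinset.filter fun t => x < t ∧ t ≤ y) =
              (p.roots.toFinset.filter fun t => x < t ∧ t ≤ c) ∪
              (p.roots.toFinset.filter fun t => c < t ∧ t ≤ y) := by
            ext t
            simp only [Finset.mem_filter, Finset.mem_union]
            constructor
            · rintro ⟨htr, ht1, ht2⟩
              by_cases htc : t ≤ c
              · exact Or.inl ⟨htr, ht1, htc⟩
              · exact Or.inr ⟨htr, lt_of_not_ge htc, ht2⟩
            · rintro (⟨htr, h1, h2⟩ | ⟨htr, h1, h2⟩)
              · exact ⟨htr, h1, le_trans h2 hcy.le⟩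
              · exact ⟨htr, lt_trans hxc h1, h2⟩
          have hdisj : Disjoint (p.roots.toFinset.filter fun t => x < t ∧ t ≤ c)
              (p.roots.toFinset.filter fun t => c < t ∧ t ≤ y) := by
            rw [Finset.disjoint_left]
            intro t ht1 ht2
            obtain ⟨_, _, hA⟩ := Finset.mem_filter.mp ht1
            obtain ⟨_, hB, _⟩ := Finset.mem_filter.mp ht2
            exact absurd (lt_of_le_of_lt hA hB) (lt_irrefl t)
          rw [hsplit, Finset.card_union_of_disjoint hdisj, ih1, ih2]
          omega
        obtain ⟨r1, hr1T, r2, hr2T, hne⟩ := htwo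
        rcases hne.lt_or_gt with hlt | hlt
        · exact go r1 r2 hr1T hr2T hlt
        · exact go r2 r1 hr2T hr1T hlt
      · -- at most one critical point
        push_neg at htwo
        rcases Finset.eq_empty_or_nonempty
            (P.roots.toFinset.filter fun t => x ≤ t ∧ t ≤ y) with hTe | ⟨r0, hr0⟩
        · -- no critical point at all
          have hroots : ∀ k, k ≤ m → sturmSeq p k ≠ 0 →
              ∀ t ∈ Set.Icc x y, (sturmSeq p k).eval t = 0 → t = x := by
            intro k hk hkne t ht ht0
            have : t ∈ (P.roots.toFinset.filter fun t => x ≤ t ∧ t ≤ y) :=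
              Finset.mem_filter.mpr ⟨hPk k hk hkne t ht0, ht.1, ht.2⟩
            rw [hTe] at this
            exact absurd this (Finset.notMem_empty t)
          have hcore := Sturm.core p hp hm' hxy (Set.left_mem_Icc.mpr hxy.le) hx hy hroots
          rw [if_neg hx, add_zero] at hcore
          have hcnt : (p.roots.toFinset.filter fun t => x < t ∧ t ≤ y) = ∅ := by
            rw [Finset.eq_empty_iff_forall_notMem]
            intro t ht
            obtain ⟨htr, ht1, ht2⟩ := Finset.mem_filter.mp ht
            have ht0 : p.eval t = 0 := (Polynomial.mem_roots'.mp (Multiset.mem_toFinset.mp htr)).2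
            have : t ∈ (P.roots.toFinset.filter fun t => x ≤ t ∧ t ≤ y) :=
              Finset.mem_filter.mpr ⟨hPk 0 (Nat.zero_le m) (by rw [hS0]; exact hp0) t ht0,
                ht1.le, ht2⟩
            rw [hTe] at this
            exact absurd this (Finset.notMem_empty t)
          rw [hcnt, hcore]
          simp
        · obtain ⟨hr0P, hr0xy⟩ := Finset.mem_filter.mp hr0
          have hroots : ∀ k, k ≤ m → sturmSeq p k ≠ 0 →
              ∀ t ∈ Set.Icc x y, (sturmSeq p k).eval t = 0 → t = r0 := by
            intro k hk hkne t ht ht0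
            exact htwo t (Finset.mem_filter.mpr ⟨hPk k hk hkne t ht0, ht.1, ht.2⟩) r0 hr0
          have hcore := Sturm.core p hp hm' hxy (Set.mem_Icc.mpr hr0xy) hx hy hroots
          by_cases hpr : p.eval r0 = 0
          · rw [if_pos hpr] at hcore
            have hcnt : (p.roots.toFinset.filter fun t => x < t ∧ t ≤ y) = {r0} := by
              ext t
              simp only [Finset.mem_filter, Finset.mem_singleton]
              constructor
              · rintro ⟨htr, ht1, ht2⟩
                have ht0 : p.eval t = 0 :=
                  (Polynomial.mem_roots'.mp (Multiset.mem_toFinset.mp htr)).2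
                exact hroots 0 (Nat.zero_le m) (by rw [hS0]; exact hp0) t ⟨ht1.le, ht2⟩ ht0
              · rintro rfl
                refine ⟨Multiset.mem_toFinset.mpr (Polynomial.mem_roots'.mpr ⟨hp0, hpr⟩), ?_, hr0xy.2⟩
                exact lt_of_le_of_ne hr0xy.1 (fun h => hx (by rw [h]; exact hpr))
            rw [hcnt, hcore]
            simp
          · rw [if_neg hpr, add_zero] at hcore
            have hcnt : (p.roots.toFinset.filter fun t => x < t ∧ t ≤ y) = ∅ := by
              rw [Finset.eq_empty_iff_forall_notMem]
              intro t ht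
              obtain ⟨htr, ht1, ht2⟩ := Finset.mem_filter.mp ht
              have ht0 : p.eval t = 0 :=
                (Polynomial.mem_roots'.mp (Multiset.mem_toFinset.mp htr)).2
              exact hpr (hroots 0 (Nat.zero_le m) (by rw [hS0]; exact hp0) t
                ⟨ht1.le, ht2⟩ ht0 ▸ ht0)
            rw [hcnt, hcore]
            simp
  have := claim (P.roots.toFinset.filter fun t => a ≤ t ∧ t ≤ b).card a b hab ha hb le_rfl
  exact this


/-- Sturm's theorem: for a squarefree real polynomial `p` with Sturm sequence
`(p₀, ..., p_m)` and `a < b` with `p a ≠ 0 ≠ p b`, the number of distinct real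
roots of `p` in `(a, b]` equals `V(a) - V(b)`. -/
theorem sturm_theorem (p : ℝ[X]) (hp : IsCoprime p (derivative p))
    (m : ℕ) (hm : sturmSeq p m ≠ 0) (hm' : sturmSeq p (m + 1) = 0)
    (a b : ℝ) (hab : a < b) (ha : p.eval a ≠ 0) (hb : p.eval b ≠ 0) :
    ((p.roots.toFinset.filter fun x => a < x ∧ x ≤ b).card : ℤ) =
      (sturmVar p m a : ℤ) - sturmVar p m b := by
  have h := sturm_theorem' p hp m hm' a b hab ha hb
  omega
end

section
/- If A is a complex n×n matrix with an eigenvalue λ of purely imaginary (or zero) real part whose geometric multiplicity is strictly less than its algebraic multiplicity, then the system x' = A·x has an unbounded solution on [0, ∞). -/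
open Matrix Filter Polynomial

/-- Shift lemma for the characteristic polynomial. -/
lemma charpoly_sub_smul_one (n : ℕ) (A : Matrix (Fin n) (Fin n) ℂ) (μ : ℂ) :
    (A - μ • (1 : Matrix (Fin n) (Fin n) ℂ)).charpoly = A.charpoly.comp (X + C μ) := by
  classical
  let f : ℂ[X] →+* ℂ[X] := eval₂RingHom Polynomial.C (X + C μ)
  have hcomp : A.charpoly.comp (X + C μ) = f A.charpoly := rfl
  rw [hcomp, Matrix.charpoly, Matrix.charpoly, RingHom.map_det]
  congr 1
  ext i j
  by_cases h : i = j
  · subst h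
    simp only [charmatrix_apply_eq, RingHom.mapMatrix_apply, Matrix.map_apply,
      Matrix.sub_apply, Matrix.smul_apply, Matrix.one_apply_eq, smul_eq_mul, mul_one,
      coe_eval₂RingHom, eval₂_sub, eval₂_X, eval₂_C, f, map_sub]
    ring_nf
  · simp only [charmatrix_apply_ne _ _ _ h, RingHom.mapMatrix_apply, Matrix.map_apply,
      Matrix.sub_apply, Matrix.smul_apply, Matrix.one_apply_ne h, smul_eq_mul, mul_zero,
      sub_zero, coe_eval₂RingHom, eval₂_neg, eval₂_C, f]

/-- If `A` has an eigenvalue `μ` with `Re μ = 0` whose geometric multiplicity is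
strictly smaller than its algebraic multiplicity, then `x' = A·x` has a solution
unbounded on `[0, ∞)` (secular terms `t·e^{μt}` from a nontrivial Jordan block). -/
theorem unbounded_of_defective_imaginary_eigenvalue (n : ℕ)
    (A : Matrix (Fin n) (Fin n) ℂ) (μ : ℂ) (hμ : μ ∈ spectrum ℂ A) (hre : μ.re = 0)
    (hdef : Module.finrank ℂ
        (LinearMap.ker (Matrix.toLin' (A - μ • (1 : Matrix (Fin n) (Fin n) ℂ)))) <
      Polynomial.rootMultiplicity μ A.charpoly) :
    ∃ x : ℝ → (Fin n → ℂ), (∀ t, HasDerivAt x (A.mulVec (x t)) t) ∧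
      ∀ M : ℝ, ∃ t : ℝ, 0 ≤ t ∧ M < ‖x t‖ := by
  classical
  set B := A - μ • (1 : Matrix (Fin n) (Fin n) ℂ) with hB
  set φ : Module.End ℂ (Fin n → ℂ) := Matrix.toLin' B with hφ
  -- algebraic multiplicity = dim of generalized eigenspace at 0 of φ
  have hcp : φ.charpoly = B.charpoly := by
    rw [← LinearMap.charpoly_toMatrix φ (Pi.basisFun ℂ (Fin n)),
      LinearMap.toMatrix_eq_toMatrix', hφ, LinearMap.toMatrix'_toLin']
  have hmult : Polynomial.rootMultiplicity μ A.charpoly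
      = Module.finrank ℂ (φ.maxGenEigenspace 0) := by
    rw [LinearMap.finrank_maxGenEigenspace_zero_eq, hcp, charpoly_sub_smul_one,
      Polynomial.rootMultiplicity_eq_natTrailingDegree]
  -- find a generalized eigenvector of rank 2
  obtain ⟨v, hv1, hv2⟩ : ∃ v : Fin n → ℂ, φ (φ v) = 0 ∧ φ v ≠ 0 := by
    by_contra hc
    push_neg at hc
    have hker : ∀ k : ℕ, ∀ u : Fin n → ℂ, (φ ^ k) u = 0 → φ u = 0 := by
      intro k
      induction k with
      | zero => intro u hu; simp only [pow_zero, Module.End.one_apply] at hu; simp [hu]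
      | succ k ih =>
        intro u hu
        have : (φ ^ k) (φ u) = 0 := by
          rw [← Module.End.mul_apply, ← pow_succ]; exact hu
        exact hc u (ih _ this)
    have hle : φ.maxGenEigenspace 0 ≤ LinearMap.ker φ := by
      intro u hu
      rw [Module.End.mem_maxGenEigenspace] at hu
      obtain ⟨k, hk⟩ := hu
      simp only [zero_smul, sub_zero] at hk
      exact LinearMap.mem_ker.2 (hker k u hk)
    have := Submodule.finrank_mono hle
    omega
  -- set up the solution
  set w : Fin n → ℂ := φ v with hw
  have hBv : B.mulVec v = w := by rw [hw, hφ, Matrix.toLin'_apply]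
  have hBw : B.mulVec w = 0 := by
    rw [← Matrix.toLin'_apply, ← hφ]; exact hv1
  have hAv : A.mulVec v = μ • v + w := by
    have : B.mulVec v = A.mulVec v - μ • v := by
      rw [hB, Matrix.sub_mulVec, Matrix.smul_mulVec, Matrix.one_mulVec]
    rw [this] at hBv; linear_combination (norm := module) hBv
  have hAw : A.mulVec w = μ • w := by
    have : B.mulVec w = A.mulVec w - μ • w := by
      rw [hB, Matrix.sub_mulVec, Matrix.smul_mulVec, Matrix.one_mulVec]
    rw [this] at hBw; linear_combination (norm := module) hBw
  refine ⟨fun t => Complex.exp (μ * t) • ((t : ℂ) • w + v), ?_, ?_⟩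
  · intro t
    have hc : HasDerivAt (fun t : ℝ => Complex.exp (μ * t)) (μ * Complex.exp (μ * t)) t := by
      have h1 : HasDerivAt (fun t : ℝ => (μ * t : ℂ)) μ t := by
        simpa using (Complex.ofRealCLM.hasDerivAt (x := t)).const_mul μ
      simpa [mul_comm] using h1.cexp
    have hg : HasDerivAt (fun t : ℝ => ((t : ℂ) • w + v)) w t := by
      have h2 : HasDerivAt (fun t : ℝ => ((t : ℂ) • w)) w t := by
        simpa using (Complex.ofRealCLM.hasDerivAt (x := t)).smul_const w
      simpa using h2.add_const v
    have h : HasDerivAt (fun t : ℝ => Complex.exp (μ * t) • ((t : ℂ) • w + v)) _ t := hc.smul hg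
    convert h using 1
    show A.mulVec (Complex.exp (μ * t) • ((t : ℂ) • w + v)) = _
    rw [Matrix.mulVec_smul, Matrix.mulVec_add, Matrix.mulVec_smul, hAw, hAv]
    module
  · intro M
    have hwpos : 0 < ‖w‖ := norm_pos_iff.2 hv2
    refine ⟨(|M| + ‖v‖ + 1) / ‖w‖, by positivity, ?_⟩
    set t : ℝ := (|M| + ‖v‖ + 1) / ‖w‖ with ht
    have htn : 0 ≤ t := by positivity
    have hnorm : ‖Complex.exp (μ * t)‖ = 1 := by
      rw [Complex.norm_exp]
      have : (μ * t).re = 0 := by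
        simp [Complex.mul_re, hre]
      rw [this, Real.exp_zero]
    rw [norm_smul, hnorm, one_mul]
    have h1 : ‖(t : ℂ) • w‖ - ‖v‖ ≤ ‖(t : ℂ) • w + v‖ := by
      have := norm_add_le ((t : ℂ) • w + v) (-v)
      simp only [add_neg_cancel_right, norm_neg] at this
      linarith
    have h2 : ‖(t : ℂ) • w‖ = t * ‖w‖ := by
      rw [norm_smul, Complex.norm_real, Real.norm_eq_abs, abs_of_nonneg htn]
    have h3 : t * ‖w‖ = |M| + ‖v‖ + 1 := by
      rw [ht, div_mul_cancel₀ _ hwpos.ne']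
    have : M ≤ |M| := le_abs_self M
    linarith
end

section
/- Cauchy's residue formula for linear systems: let A be a complex n×n matrix and a ∈ ℂⁿ. The unique solution of y' = A·y with y(0) = a is y(t) = Σ over eigenvalues λ of A of Res_{s=λ} [ (s·I - A)⁻¹ · a · e^{st} ], i.e., y(t) = exp(tA)·a, where exp(tA) equals the sum of residues of (sI - A)⁻¹ e^{st} over the poles of the resolvent. -/
open Matrix Polynomial Real

attribute [local instance] Matrix.linftyOpNormedRing Matrix.linftyOpNormedAlgebra

open scoped Topology Nat
open Metric Set Finset

noncomputable section

namespace CauchyResidueFormulaAux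

variable {n : ℕ}

local notation "Mat" => Matrix (Fin n) (Fin n) ℂ

lemma eval_charpoly (A : Mat) (s : ℂ) :
    A.charpoly.eval s = (s • (1 : Mat) - A).det := by
  rw [Matrix.charpoly, _root_.eval_det, Matrix.matPolyEquiv_charmatrix]
  congr 1
  rw [Polynomial.eval_sub, Polynomial.eval_X, Polynomial.eval_C]
  congr 1
  ext i j
  by_cases h : i = j
  · subst h
    simp [Matrix.scalar_apply, Matrix.smul_apply, Matrix.one_apply, Matrix.diagonal_apply]
  · simp [Matrix.scalar_apply, Matrix.smul_apply, Matrix.one_apply, Matrix.diagonal_apply, h]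

lemma inv_mulVec_eq {B : Mat} (hB : IsUnit B.det) {x b : Fin n → ℂ}
    (h : B.mulVec x = b) : B⁻¹.mulVec b = x := by
  rw [← h, Matrix.mulVec_mulVec, Matrix.nonsing_inv_mul _ hB, Matrix.one_mulVec]

lemma resolvent_expand (A : Mat) {μ s : ℂ} (v : Fin n → ℂ)
    (hv : ((A - μ • (1 : Mat)) ^ n).mulVec v = 0) (hs : s ≠ μ)
    (hdet : IsUnit (s • (1 : Mat) - A).det) :
    ((s • (1 : Mat) - A)⁻¹).mulVec v
      = ∑ k ∈ Finset.range n, ((s - μ) ^ (k + 1))⁻¹ • ((A - μ • (1 : Mat)) ^ k).mulVec v := by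
  have hw : s - μ ≠ 0 := sub_ne_zero.mpr hs
  apply inv_mulVec_eq hdet
  set N : Mat := A - μ • (1 : Mat) with hN
  set w : ℂ := s - μ with hwdef
  have key : (s • (1 : Mat) - A) = w • (1 : Mat) - N := by
    rw [hwdef, hN, sub_smul]; abel
  rw [key]
  have hterm : ∀ k : ℕ, (w • (1 : Mat) - N).mulVec ((w ^ (k + 1))⁻¹ • (N ^ k).mulVec v)
      = (w ^ k)⁻¹ • (N ^ k).mulVec v - (w ^ (k + 1))⁻¹ • (N ^ (k + 1)).mulVec v := by
    intro k
    rw [Matrix.mulVec_smul, Matrix.sub_mulVec, Matrix.smul_mulVec,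
      Matrix.one_mulVec, smul_sub, smul_smul, Matrix.mulVec_mulVec, ← pow_succ']
    have h1 : (w ^ (k + 1))⁻¹ * w = (w ^ k)⁻¹ := by
      rw [pow_succ]
      field_simp
    rw [h1]
  calc (w • (1 : Mat) - N).mulVec
        (∑ k ∈ Finset.range n, (w ^ (k + 1))⁻¹ • (N ^ k).mulVec v)
      = ∑ k ∈ Finset.range n,
          (w • (1 : Mat) - N).mulVec ((w ^ (k + 1))⁻¹ • (N ^ k).mulVec v) := by
        have := map_sum (Matrix.mulVecLin (w • (1 : Mat) - N))
          (fun k => (w ^ (k + 1))⁻¹ • (N ^ k).mulVec v) (Finset.range n)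
        simp only [Matrix.mulVecLin_apply] at this
        exact this
    _ = ∑ k ∈ Finset.range n,
          ((w ^ k)⁻¹ • (N ^ k).mulVec v - (w ^ (k + 1))⁻¹ • (N ^ (k + 1)).mulVec v) := by
        exact Finset.sum_congr rfl fun k _ => hterm k
    _ = v := by
        rw [Finset.sum_range_sub' (fun k => (w ^ k)⁻¹ • (N ^ k).mulVec v) n]
        simp [hv]

lemma exp_mulVec_eq (A : Mat) (τ μ : ℂ) (v : Fin n → ℂ)
    (hv : ((A - μ • (1 : Mat)) ^ n).mulVec v = 0) :
    (NormedSpace.exp (τ • A)).mulVec v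
      = Complex.exp (μ * τ) • ∑ k ∈ Finset.range n,
          (τ ^ k / (k ! : ℂ)) • ((A - μ • (1 : Mat)) ^ k).mulVec v := by
  set N : Mat := A - μ • (1 : Mat) with hN
  have hNk : ∀ k, n ≤ k → (N ^ k).mulVec v = 0 := by
    intro k hk
    have hpow : N ^ k = N ^ (k - n) * N ^ n := by
      rw [← pow_add]
      congr 1
      omega
    rw [hpow, ← Matrix.mulVec_mulVec, hv, Matrix.mulVec_zero]
  have hsplit : τ • A = (τ * μ) • (1 : Mat) + τ • N := by
    rw [hN, smul_sub, smul_smul]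
    abel
  have hcomm : Commute ((τ * μ) • (1 : Mat)) (τ • N) :=
    ((Commute.one_left N).smul_right τ).smul_left (τ * μ)
  have hexp1 : NormedSpace.exp ((τ * μ) • (1 : Mat)) = Complex.exp (τ * μ) • (1 : Mat) := by
    have h1 : (τ * μ) • (1 : Mat) = algebraMap ℂ Mat (τ * μ) :=
      (Algebra.algebraMap_eq_smul_one _).symm
    erw [h1, ← NormedSpace.map_exp (algebraMap ℂ Mat) (continuous_algebraMap ℂ Mat),
      ← Complex.exp_eq_exp_ℂ, Algebra.algebraMap_eq_smul_one]
  rw [hsplit, Matrix.exp_add_of_commute _ _ hcomm, hexp1, smul_mul_assoc, one_mul,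
    Matrix.smul_mulVec, mul_comm τ μ]
  congr 1
  let l : Mat →ₗ[ℂ] (Fin n → ℂ) :=
    { toFun := fun M => M.mulVec v
      map_add' := fun M₁ M₂ => Matrix.add_mulVec M₁ M₂ v
      map_smul' := fun c M => Matrix.smul_mulVec c M v }
  let L : Mat →L[ℂ] (Fin n → ℂ) := ⟨l, l.continuous_of_finiteDimensional⟩
  have hsummable : Summable fun k : ℕ => (k !⁻¹ : ℂ) • (τ • N) ^ k :=
    NormedSpace.expSeries_summable' (τ • N)
  have hmap := (hsummable.hasSum.mapL L).tsum_eq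
  have hexp2 : (NormedSpace.exp (τ • N)).mulVec v
      = ∑' k : ℕ, ((k !⁻¹ : ℂ) • (τ • N) ^ k).mulVec v := by
    calc (NormedSpace.exp (τ • N)).mulVec v
        = L (∑' k : ℕ, (k !⁻¹ : ℂ) • (τ • N) ^ k) := by
          rw [NormedSpace.exp_eq_tsum ℂ]
          rfl
      _ = ∑' k : ℕ, ((k !⁻¹ : ℂ) • (τ • N) ^ k).mulVec v := hmap.symm
  have hterm : ∀ k : ℕ, ((k !⁻¹ : ℂ) • (τ • N) ^ k).mulVec v
      = (((k ! : ℂ))⁻¹ * τ ^ k) • (N ^ k).mulVec v := by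
    intro k
    rw [_root_.smul_pow, smul_smul, Matrix.smul_mulVec]
  rw [hexp2]
  rw [tsum_eq_sum (s := Finset.range n) (fun k hk => by
    rw [hterm k, hNk k (by simpa using hk), smul_zero])]
  refine Finset.sum_congr rfl fun k _ => ?_
  rw [hterm k, div_eq_mul_inv, mul_comm]

lemma residue_integral (τ c : ℂ) (k : ℕ) {r : ℝ} (hr : 0 < r) :
    (∮ z in C(c, r), Complex.exp (z * τ) * ((z - c) ^ (k + 1))⁻¹)
      = (2 * Real.pi * Complex.I) * (τ ^ k / (k ! : ℂ) * Complex.exp (c * τ)) := by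
  set f : ℂ → ℂ := fun z => Complex.exp (z * τ) with hf
  have hdiff : Differentiable ℂ f :=
    Complex.differentiable_exp.comp (differentiable_id.mul_const τ)
  set q : FormalMultilinearSeries ℂ ℂ ℂ :=
    FormalMultilinearSeries.ofScalars ℂ
      (fun m => Complex.exp (c * τ) * τ ^ m / (m ! : ℂ)) with hq
  have hradius : q.radius = ⊤ := by
    apply FormalMultilinearSeries.radius_eq_top_of_summable_norm
    intro r'
    have hg : Summable (fun m : ℕ =>
        ‖Complex.exp (c * τ)‖ * ((‖τ‖ * (r' : ℝ)) ^ m / m !)) :=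
      (Real.summable_pow_div_factorial (‖τ‖ * (r' : ℝ))).mul_left _
    refine hg.congr fun m => ?_
    rw [hq, FormalMultilinearSeries.ofScalars_norm, norm_div, norm_mul, norm_pow,
      Complex.norm_natCast, mul_pow]
    ring
  have hq2 : HasFPowerSeriesOnBall f q c ⊤ := by
    refine ⟨le_of_eq hradius.symm, by simp, ?_⟩
    intro y _
    have h1 : HasSum (fun m : ℕ => (y * τ) ^ m / (m ! : ℂ)) (Complex.exp (y * τ)) := by
      have h := NormedSpace.expSeries_div_hasSum_exp (y * τ)
      rwa [← Complex.exp_eq_exp_ℂ] at h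
    have h2 := h1.mul_left (Complex.exp (c * τ))
    have h3 : f (c + y) = Complex.exp (c * τ) * Complex.exp (y * τ) := by
      rw [hf]
      simp only [add_mul, Complex.exp_add]
    have h4 : ∀ m : ℕ, q m (fun _ => y) = Complex.exp (c * τ) * ((y * τ) ^ m / (m ! : ℂ)) := by
      intro m
      rw [hq, FormalMultilinearSeries.ofScalars_apply_eq, smul_eq_mul, mul_pow]
      ring
    rw [h3]
    simp only [h4]
    exact h2
  have h1 : HasFPowerSeriesOnBall f (cauchyPowerSeries f c r) c ⊤ := by
    have := hdiff.hasFPowerSeriesOnBall c (R := ⟨r, hr.le⟩) hr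
    exact this
  have heq := h1.hasFPowerSeriesAt.eq_formalMultilinearSeries hq2.hasFPowerSeriesAt
  have hcoeff := congrFun heq k
  have happ := congrArg
    (fun (m : ContinuousMultilinearMap ℂ (fun _ : Fin k => ℂ) ℂ) => m (fun _ => 1)) hcoeff
  rw [cauchyPowerSeries_apply, hq, FormalMultilinearSeries.ofScalars_apply_eq] at happ
  have hint : (∮ z in C(c, r), ((1 : ℂ) / (z - c)) ^ k • ((z - c)⁻¹ • f z))
      = ∮ z in C(c, r), Complex.exp (z * τ) * ((z - c) ^ (k + 1))⁻¹ := by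
    apply circleIntegral.integral_congr hr.le
    intro z _
    show ((1 : ℂ) / (z - c)) ^ k • ((z - c)⁻¹ • f z) = f z * ((z - c) ^ (k + 1))⁻¹
    rw [smul_eq_mul, smul_eq_mul, one_div, pow_succ, mul_inv, ← inv_pow]
    ring
  rw [hint] at happ
  have h2pi : (2 * (Real.pi : ℂ) * Complex.I) ≠ 0 := by
    simp [Real.pi_ne_zero, Complex.I_ne_zero, Complex.ofReal_ne_zero]
  rw [inv_smul_eq_iff₀ h2pi] at happ
  rw [happ, smul_eq_mul, one_pow, smul_eq_mul, mul_one]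
  ring

lemma zero_integral (τ μ c : ℂ) (k : ℕ) {r : ℝ} (hr : 0 < r)
    (hμ : μ ∉ closedBall c r) :
    (∮ z in C(c, r), Complex.exp (z * τ) * ((z - μ) ^ (k + 1))⁻¹) = 0 := by
  have hne : ∀ z ∈ closedBall c r, z - μ ≠ 0 := by
    intro z hz
    exact sub_ne_zero.mpr (by rintro rfl; exact hμ hz)
  apply Complex.circleIntegral_eq_zero_of_differentiable_on_off_countable hr.le
    Set.countable_empty
  · apply ContinuousOn.mul
    · exact (Complex.continuous_exp.comp (continuous_id.mul continuous_const)).continuousOn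
    · exact ((continuousOn_id.sub continuousOn_const).pow _).inv₀
        fun z hz => pow_ne_zero _ (hne z hz)
  · intro z hz
    apply DifferentiableAt.mul
    · exact (Complex.differentiable_exp.comp (differentiable_id.mul_const τ)).differentiableAt
    · exact (((differentiable_id.sub_const μ).pow _).differentiableAt).inv
        (pow_ne_zero _ (hne z (ball_subset_closedBall hz.1)))

lemma circleIntegral_finset_sum {ι : Type*} (s : Finset ι) (f : ι → ℂ → ℂ) (c : ℂ) (R : ℝ)
    (h : ∀ i ∈ s, CircleIntegrable (f i) c R) :
    (∮ z in C(c, R), ∑ j ∈ s, f j z) = ∑ j ∈ s, ∮ z in C(c, R), f j z := by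
  simp only [circleIntegral, Finset.smul_sum]
  rw [intervalIntegral.integral_finset_sum]
  exact fun j hj => (h j hj).out


lemma sep_radius (S : Finset ℂ) : ∃ r₀ > (0:ℝ), ∀ x ∈ S, ∀ z ∈ S, x ≠ z → r₀ ≤ dist x z := by
  classical
  set P := (S ×ˢ S).filter (fun p => p.1 ≠ p.2) with hP
  rcases P.eq_empty_or_nonempty with h | h
  · refine ⟨1, one_pos, fun x hx z hz hxz => ?_⟩
    exfalso
    have hmem : (x, z) ∈ P := Finset.mem_filter.mpr ⟨Finset.mem_product.mpr ⟨hx, hz⟩, hxz⟩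
    rw [h] at hmem
    exact Finset.notMem_empty _ hmem
  · refine ⟨P.inf' h (fun p => dist p.1 p.2), ?_, ?_⟩
    · obtain ⟨p, hp, hval⟩ := P.exists_mem_eq_inf' h (fun p => dist p.1 p.2)
      rw [hval]
      exact dist_pos.mpr (Finset.mem_filter.mp hp).2
    · intro x hx z hz hxz
      have hmem : (x, z) ∈ P := Finset.mem_filter.mpr ⟨Finset.mem_product.mpr ⟨hx, hz⟩, hxz⟩
      exact Finset.inf'_le (s := P) (fun p : ℂ × ℂ => dist p.1 p.2) hmem

lemma key2 (A : Mat) (a : Fin n → ℂ) (τ : ℂ) (i : Fin n) :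
    ∃ r₀ > (0:ℝ), ∀ r : ℝ, 0 < r → r < r₀ →
      (NormedSpace.exp (τ • A)).mulVec a i = ∑ lam ∈ A.charpoly.roots.toFinset,
        (2 * Real.pi * Complex.I)⁻¹ •
          (∮ z in C(lam, r), Complex.exp (z * τ) •
            (((z • (1 : Mat) - A)⁻¹).mulVec a i)) := by
  classical
  set S : Finset ℂ := A.charpoly.roots.toFinset with hS
  set f : Module.End ℂ (Fin n → ℂ) := Matrix.toLinAlgEquiv' A with hf
  have htop : a ∈ ⨆ μ : ℂ, f.maxGenEigenspace μ := by
    rw [Module.End.iSup_maxGenEigenspace_eq_top f]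
    exact Submodule.mem_top
  rw [Submodule.mem_iSup_iff_exists_finsupp] at htop
  obtain ⟨w, hwmem, hwsum⟩ := htop
  have hfpow : ∀ (μ : ℂ) (k : ℕ), (f - μ • 1) ^ k
      = Matrix.toLinAlgEquiv' ((A - μ • (1 : Mat)) ^ k) := by
    intro μ k
    rw [hf, map_pow, map_sub, _root_.map_smul, _root_.map_one]
  have hpow : ∀ μ : ℂ, ((A - μ • (1 : Mat)) ^ n).mulVec (w μ) = 0 := by
    intro μ
    obtain ⟨k, hk⟩ := (Module.End.mem_maxGenEigenspace f μ (w μ)).mp (hwmem μ)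
    have h2 : w μ ∈ LinearMap.ker ((f - μ • 1) ^ k) := hk
    have h3 := Module.End.ker_pow_le_ker_pow_finrank (f - μ • 1) k h2
    rw [Module.finrank_fin_fun ℂ] at h3
    rw [LinearMap.mem_ker, hfpow, Matrix.toLinAlgEquiv'_apply] at h3
    exact h3
  have hsupp : ∀ μ : ℂ, w μ ≠ 0 → μ ∈ S := by
    intro μ hμ
    have h1 : f.HasEigenvalue μ := by
      apply Module.End.hasEigenvalue_of_hasGenEigenvalue (k := n)
      rw [Module.End.hasGenEigenvalue_iff]
      rw [Submodule.ne_bot_iff]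
      refine ⟨w μ, ?_, hμ⟩
      rw [Module.End.mem_genEigenspace_nat, LinearMap.mem_ker, hfpow,
        Matrix.toLinAlgEquiv'_apply]
      exact hpow μ
    obtain ⟨v0, hv0⟩ := h1.exists_hasEigenvector
    have hAv : A.mulVec v0 = μ • v0 := by
      have h2 := hv0.apply_eq_smul
      rwa [hf, Matrix.toLinAlgEquiv'_apply] at h2
    have hdet0 : (μ • (1 : Mat) - A).det = 0 := by
      by_contra hdet
      have hz : (μ • (1 : Mat) - A).mulVec v0 = 0 := by
        rw [Matrix.sub_mulVec, Matrix.smul_mulVec, Matrix.one_mulVec, hAv, sub_self]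
      have h4 := inv_mulVec_eq (isUnit_iff_ne_zero.mpr hdet) hz
      rw [Matrix.mulVec_zero] at h4
      exact hv0.2 h4.symm
    rw [hS, Multiset.mem_toFinset, Polynomial.mem_roots A.charpoly_monic.ne_zero]
    rw [Polynomial.IsRoot, eval_charpoly, hdet0]
  have hsum : a = ∑ μ ∈ S, w μ := by
    rw [← hwsum, Finsupp.sum]
    apply Finset.sum_subset
    · intro μ hμ
      exact hsupp μ (Finsupp.mem_support_iff.mp hμ)
    · intro μ _ hμ
      exact Finsupp.notMem_support_iff.mp hμ
  set vv : ℂ → ℕ → (Fin n → ℂ) := fun μ k => ((A - μ • (1 : Mat)) ^ k).mulVec (w μ) with hvv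
  obtain ⟨r₀, hr₀, hr₀sep⟩ := sep_radius S
  refine ⟨r₀, hr₀, ?_⟩
  intro r hr hrlt
  -- facts about spheres
  have hsep : ∀ lam ∈ S, ∀ z ∈ sphere lam r, ∀ μ ∈ S, z ≠ μ := by
    intro lam hlam z hz μ hμ
    rintro rfl
    rw [mem_sphere] at hz
    by_cases h : z = lam
    · subst h
      rw [dist_self] at hz
      exact hr.ne hz
    · have := hr₀sep z hμ lam hlam h
      rw [hz] at this
      exact absurd (lt_of_lt_of_le hrlt this) (lt_irrefl r)
  have hdetz : ∀ lam ∈ S, ∀ z ∈ sphere lam r, IsUnit ((z • (1 : Mat) - A).det) := by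
    intro lam hlam z hz
    rw [isUnit_iff_ne_zero]
    intro h0
    have hroot : z ∈ S := by
      rw [hS, Multiset.mem_toFinset, Polynomial.mem_roots A.charpoly_monic.ne_zero]
      rw [Polynomial.IsRoot, eval_charpoly, h0]
    exact hsep lam hlam z hz z hroot rfl
  -- the per-circle computation
  have hcircle : ∀ lam ∈ S,
      (∮ z in C(lam, r), Complex.exp (z * τ) • (((z • (1 : Mat) - A)⁻¹).mulVec a i))
        = (2 * Real.pi * Complex.I) *
            ∑ k ∈ Finset.range n, τ ^ k / (k ! : ℂ) * Complex.exp (lam * τ) * vv lam k i := by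
    intro lam hlam
    set F : ℂ → ℕ → ℂ → ℂ :=
      fun μ k z => Complex.exp (z * τ) * (((z - μ) ^ (k + 1))⁻¹ * vv μ k i) with hF
    have hcont : ∀ μ ∈ S, ∀ k : ℕ, ContinuousOn (F μ k) (sphere lam r) := by
      intro μ hμ k
      apply ContinuousOn.mul
      · exact (Complex.continuous_exp.comp (continuous_id.mul continuous_const)).continuousOn
      · apply ContinuousOn.mul ?_ continuousOn_const
        apply ContinuousOn.inv₀ ((continuousOn_id.sub continuousOn_const).pow _)
        intro z hz
        exact pow_ne_zero _ (sub_ne_zero.mpr (hsep lam hlam z hz μ hμ))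
    have hcongr : Set.EqOn
        (fun z => Complex.exp (z * τ) • (((z • (1 : Mat) - A)⁻¹).mulVec a i))
        (fun z => ∑ μ ∈ S, ∑ k ∈ Finset.range n, F μ k z) (sphere lam r) := by
      intro z hz
      have hres : ((z • (1 : Mat) - A)⁻¹).mulVec a
          = ∑ μ ∈ S, ∑ k ∈ Finset.range n, ((z - μ) ^ (k + 1))⁻¹ • vv μ k := by
        calc ((z • (1 : Mat) - A)⁻¹).mulVec a
            = ∑ μ ∈ S, ((z • (1 : Mat) - A)⁻¹).mulVec (w μ) := by
              rw [hsum]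
              have := map_sum (Matrix.mulVecLin ((z • (1 : Mat) - A)⁻¹))
                (fun μ => w μ) S
              simp only [Matrix.mulVecLin_apply] at this
              exact this
          _ = ∑ μ ∈ S, ∑ k ∈ Finset.range n, ((z - μ) ^ (k + 1))⁻¹ • vv μ k :=
              Finset.sum_congr rfl fun μ hμ => resolvent_expand A (w μ) (hpow μ)
                (hsep lam hlam z hz μ hμ) (hdetz lam hlam z hz)
      show Complex.exp (z * τ) • (((z • (1 : Mat) - A)⁻¹).mulVec a i)
          = ∑ μ ∈ S, ∑ k ∈ Finset.range n, F μ k z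
      rw [show ((z • (1 : Mat) - A)⁻¹).mulVec a i
          = ∑ μ ∈ S, ∑ k ∈ Finset.range n, ((z - μ) ^ (k + 1))⁻¹ * vv μ k i by
        rw [congrFun hres i]
        simp [Finset.sum_apply]]
      rw [hF, smul_eq_mul, Finset.mul_sum]
      apply Finset.sum_congr rfl
      intro μ _
      rw [Finset.mul_sum]
    rw [circleIntegral.integral_congr hr.le hcongr]
    rw [circleIntegral_finset_sum S _ lam r (fun μ hμ =>
      ContinuousOn.circleIntegrable hr.le
        (continuousOn_finset_sum _ (fun k _ => hcont μ hμ k)))]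
    have hswap : ∀ μ ∈ S, (∮ z in C(lam, r), ∑ k ∈ Finset.range n, F μ k z)
        = ∑ k ∈ Finset.range n, ∮ z in C(lam, r), F μ k z := by
      intro μ hμ
      exact circleIntegral_finset_sum (Finset.range n) _ lam r (fun k _ =>
        ContinuousOn.circleIntegrable hr.le (hcont μ hμ k))
    rw [Finset.sum_congr rfl hswap]
    have hFsmul : ∀ μ k, F μ k = fun z =>
        (Complex.exp (z * τ) * ((z - μ) ^ (k + 1))⁻¹) • vv μ k i := by
      intro μ k
      funext z
      rw [hF, smul_eq_mul]
      ring
    have hzero : ∀ μ ∈ S, μ ≠ lam →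
        (∑ k ∈ Finset.range n, ∮ z in C(lam, r), F μ k z) = 0 := by
      intro μ hμ hne
      apply Finset.sum_eq_zero
      intro k _
      rw [hFsmul μ k, circleIntegral.integral_smul_const]
      have hout : μ ∉ closedBall lam r := by
        rw [mem_closedBall]
        intro hle
        have := hr₀sep μ hμ lam hlam hne
        exact absurd (lt_of_lt_of_le hrlt this) (not_lt.mpr hle)
      rw [zero_integral τ μ lam k hr hout, zero_smul]
    rw [Finset.sum_eq_single_of_mem lam hlam (fun μ hμ hne => hzero μ hμ hne)]
    have hlamval : ∀ k ∈ Finset.range n, (∮ z in C(lam, r), F lam k z)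
        = (2 * Real.pi * Complex.I) * (τ ^ k / (k ! : ℂ) * Complex.exp (lam * τ)) * vv lam k i := by
      intro k _
      rw [hFsmul lam k, circleIntegral.integral_smul_const, residue_integral τ lam k hr,
        smul_eq_mul]
    rw [Finset.sum_congr rfl hlamval, Finset.mul_sum]
    apply Finset.sum_congr rfl
    intro k _
    ring
  rw [Finset.sum_congr rfl (fun lam hlam => by rw [hcircle lam hlam])]
  have hfinal : ∀ lam ∈ S, (2 * Real.pi * Complex.I)⁻¹ •
      ((2 * Real.pi * Complex.I) *
        ∑ k ∈ Finset.range n, τ ^ k / (k ! : ℂ) * Complex.exp (lam * τ) * vv lam k i)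
      = ∑ k ∈ Finset.range n, τ ^ k / (k ! : ℂ) * Complex.exp (lam * τ) * vv lam k i := by
    intro lam _
    rw [smul_eq_mul, ← mul_assoc, inv_mul_cancel₀, one_mul]
    simp [Real.pi_ne_zero, Complex.I_ne_zero, Complex.ofReal_ne_zero]
  rw [Finset.sum_congr rfl hfinal]
  -- left side
  have hexp : (NormedSpace.exp (τ • A)).mulVec a
      = ∑ μ ∈ S, Complex.exp (μ * τ) •
          ∑ k ∈ Finset.range n, (τ ^ k / (k ! : ℂ)) • vv μ k := by
    calc (NormedSpace.exp (τ • A)).mulVec a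
        = ∑ μ ∈ S, (NormedSpace.exp (τ • A)).mulVec (w μ) := by
          rw [hsum]
          have := map_sum (Matrix.mulVecLin (NormedSpace.exp (τ • A))) (fun μ => w μ) S
          simp only [Matrix.mulVecLin_apply] at this
          exact this
      _ = ∑ μ ∈ S, Complex.exp (μ * τ) •
            ∑ k ∈ Finset.range n, (τ ^ k / (k ! : ℂ)) • vv μ k :=
          Finset.sum_congr rfl fun μ _ => exp_mulVec_eq A τ μ (w μ) (hpow μ)
  rw [congrFun hexp i]
  rw [Finset.sum_apply]
  apply Finset.sum_congr rfl
  intro μ _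
  rw [Pi.smul_apply, Finset.sum_apply, smul_eq_mul, Finset.mul_sum]
  apply Finset.sum_congr rfl
  intro k _
  rw [Pi.smul_apply, smul_eq_mul]
  ring

end CauchyResidueFormulaAux

end

/-- Cauchy's 1839 residue formula for linear systems: the solution of `y' = A·y`,
`y 0 = a`, is `y t = exp (t A) · a`, and it equals (entrywise) the sum over the
eigenvalues `λ` of `A` of the residues of `e^{st} (s·I - A)⁻¹ a`, the residue at
`λ` being computed as a small circle integral around `λ`. -/
theorem cauchy_residue_formula (n : ℕ) (A : Matrix (Fin n) (Fin n) ℂ) (a : Fin n → ℂ)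
    (y : ℝ → (Fin n → ℂ)) (hy0 : y 0 = a)
    (hy : ∀ t, HasDerivAt y (A.mulVec (y t)) t) :
    (∀ t : ℝ, y t = (NormedSpace.exp (t • A)).mulVec a) ∧
    ∀ t : ℝ, ∀ i : Fin n, ∃ r₀ > 0, ∀ r : ℝ, 0 < r → r < r₀ →
      y t i = ∑ lam ∈ A.charpoly.roots.toFinset,
        (2 * Real.pi * Complex.I)⁻¹ •
          (∮ s in C(lam, r), Complex.exp (s * t) •
            (((s • (1 : Matrix (Fin n) (Fin n) ℂ) - A)⁻¹).mulVec a i)) := by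
  classical
  have hexp_eq : (NormedSpace.exp : Matrix (Fin n) (Fin n) ℂ → Matrix (Fin n) (Fin n) ℂ)
      = NormedSpace.exp := rfl
  have part1 : ∀ t : ℝ, y t = (NormedSpace.exp (t • A)).mulVec a := by
    let l : Matrix (Fin n) (Fin n) ℂ →ₗ[ℝ] (Fin n → ℂ) :=
      { toFun := fun M => M.mulVec a
        map_add' := fun M₁ M₂ => Matrix.add_mulVec M₁ M₂ a
        map_smul' := fun c M => by
          funext j
          simp only [Matrix.mulVec, dotProduct, Matrix.smul_apply, RingHom.id_apply,
            Pi.smul_apply]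
          rw [Finset.smul_sum]
          exact Finset.sum_congr rfl fun p _ => smul_mul_assoc c (M j p) (a p) }
    let L : Matrix (Fin n) (Fin n) ℂ →L[ℝ] (Fin n → ℂ) := ⟨l, l.continuous_of_finiteDimensional⟩
    have hODE : ∀ s : ℝ, HasDerivAt (fun u : ℝ => (NormedSpace.exp (u • A)).mulVec a)
        (A.mulVec ((NormedSpace.exp (s • A)).mulVec a)) s := by
      intro s
      have h1 : HasDerivAt (fun u : ℝ => NormedSpace.exp (u • A))
          (NormedSpace.exp (s • A) * A) s := hasDerivAt_exp_smul_const A s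
      have h2 := L.hasFDerivAt.comp_hasDerivAt s h1
      have hcomm : NormedSpace.exp (s • A) * A = A * NormedSpace.exp (s • A) :=
        (((Commute.refl A).smul_right s).exp_right).eq.symm
      have h3 : (fun u : ℝ => L (NormedSpace.exp (u • A)))
          = fun u : ℝ => (NormedSpace.exp (u • A)).mulVec a := by
        funext u
        rw [hexp_eq]
        rfl
      have h4 : L (NormedSpace.exp (s • A) * A)
          = A.mulVec ((NormedSpace.exp (s • A)).mulVec a) := by
        show (NormedSpace.exp (s • A) * A).mulVec a = _
        rw [hcomm, hexp_eq, Matrix.mulVec_mulVec]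
      rw [← h3, ← h4]
      exact h2
    let m : (Fin n → ℂ) →ₗ[ℝ] (Fin n → ℂ) := (Matrix.mulVecLin A).restrictScalars ℝ
    let M : (Fin n → ℂ) →L[ℝ] (Fin n → ℂ) := ⟨m, m.continuous_of_finiteDimensional⟩
    intro t
    have hmem0 : (0:ℝ) ∈ Set.Ioo (-(|t|+1)) (|t|+1) := by
      constructor
      · nlinarith [abs_nonneg t]
      · nlinarith [abs_nonneg t]
    have hmemt : t ∈ Set.Ioo (-(|t|+1)) (|t|+1) := by
      constructor
      · nlinarith [neg_abs_le t]
      · nlinarith [le_abs_self t]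
    have hEq := ODE_solution_unique_of_mem_Ioo
      (v := fun _ (x : Fin n → ℂ) => M x) (K := ‖M‖₊) (s := fun _ => Set.univ)
      (f := y) (g := fun u : ℝ => (NormedSpace.exp (u • A)).mulVec a)
      (fun _ _ => M.lipschitz.lipschitzOnWith)
      hmem0
      (fun s _ => ⟨hy s, trivial⟩)
      (fun s _ => ⟨hODE s, trivial⟩)
      (by
        rw [hy0]
        show a = (NormedSpace.exp ((0:ℝ) • A)).mulVec a
        rw [zero_smul, NormedSpace.exp_zero, Matrix.one_mulVec])
    exact hEq hmemt
  refine ⟨part1, fun t i => ?_⟩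
  obtain ⟨r₀, hr₀, hkey⟩ := CauchyResidueFormulaAux.key2 A a (t : ℂ) i
  refine ⟨r₀, hr₀, fun r hr hrlt => ?_⟩
  have hsm : (t : ℝ) • A = (t : ℂ) • A := by
    ext i' j'
    simp [Matrix.smul_apply, Complex.real_smul]
  rw [part1 t, hsm]
  exact hkey r hr hrlt
end
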